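/- arXiv:1212.6595 — 8 statements merged into one kernel-verified Lean document; each statement's English description precedes it below -/
import Mathlib

section
/- Let U be a smooth real-valued function on an open interval I, let E and Ẽ be real constants, and let ψ, φ be smooth real functions on I satisfying −ψ''(x) + U(x)ψ(x) = Eψ(x) and −φ''(x) + U(x)φ(x) = Ẽφ(x) on I, with φ(x) ≠ 0 for all x ∈ I. Then the function ψ^{[1]}(x) = (φ(x)ψ'(x) − φ'(x)ψ(x))/φ(x) satisfies −(ψ^{[1]})''(x) + U^{[1]}(x)ψ^{[1]}(x) = Eψ^{[1]}(x) on I, where U^{[1]}(x) = U(x) − 2(φ''(x)φ(x) − φ'(x)²)/φ(x)². -/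
/-- Darboux transformation of a solution of the 1-d Schrödinger equation. -/
theorem darboux_transform_solution
    (a b : ℝ) (U ψ φ : ℝ → ℝ) (E Et : ℝ)
    (hU : ContDiffOn ℝ (⊤ : ℕ∞) U (Set.Ioo a b))
    (hψ : ContDiffOn ℝ (⊤ : ℕ∞) ψ (Set.Ioo a b))
    (hφ : ContDiffOn ℝ (⊤ : ℕ∞) φ (Set.Ioo a b))
    (heψ : ∀ x ∈ Set.Ioo a b, -(deriv (deriv ψ) x) + U x * ψ x = E * ψ x)
    (heφ : ∀ x ∈ Set.Ioo a b, -(deriv (deriv φ) x) + U x * φ x = Et * φ x)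
    (hφ0 : ∀ x ∈ Set.Ioo a b, φ x ≠ 0) :
    ∀ x ∈ Set.Ioo a b,
      -(deriv (deriv (fun y => (φ y * deriv ψ y - deriv φ y * ψ y) / φ y)) x)
        + (U x - 2 * (deriv (deriv φ) x * φ x - (deriv φ x) ^ 2) / (φ x) ^ 2)
          * ((φ x * deriv ψ x - deriv φ x * ψ x) / φ x)
      = E * ((φ x * deriv ψ x - deriv φ x * ψ x) / φ x) := by
  intro x hx
  set I := Set.Ioo a b with hIdef
  have hI : IsOpen I := isOpen_Ioo
  -- derivatives are smooth on I
  have hψ1 : ContDiffOn ℝ (⊤ : ℕ∞) (deriv ψ) I := hψ.deriv_of_isOpen hI (by simp)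
  have hφ1 : ContDiffOn ℝ (⊤ : ℕ∞) (deriv φ) I := hφ.deriv_of_isOpen hI (by simp)
  -- HasDerivAt facts at any point of I
  have key : ∀ (f : ℝ → ℝ), ContDiffOn ℝ (⊤ : ℕ∞) f I → ∀ y ∈ I, HasDerivAt f (deriv f y) y := by
    intro f hf y hy
    exact (((hf.differentiableOn (by simp)) y hy).differentiableAt (hI.mem_nhds hy)).hasDerivAt
  have hψa := key ψ hψ
  have hφa := key φ hφ
  have hψ1a := key (deriv ψ) hψ1
  have hφ1a := key (deriv φ) hφ1
  -- first derivative of w on I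
  set W1 : ℝ → ℝ := fun y =>
    ((Et - E) * (φ y * ψ y) * φ y
      - (φ y * deriv ψ y - deriv φ y * ψ y) * deriv φ y) / (φ y) ^ 2 with hW1def
  have hw1 : ∀ y ∈ I, HasDerivAt
      (fun z => (φ z * deriv ψ z - deriv φ z * ψ z) / φ z) (W1 y) y := by
    intro y hy
    have hg : HasDerivAt (fun z => φ z * deriv ψ z - deriv φ z * ψ z)
        ((Et - E) * (φ y * ψ y)) y := by
      have h := ((hφa y hy).mul (hψ1a y hy)).sub ((hφ1a y hy).mul (hψa y hy))
      refine h.congr_deriv ?_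
      have h1 := heψ y hy
      have h2 := heφ y hy
      linear_combination ψ y * h2 - φ y * h1
    exact hg.div (hφa y hy) (hφ0 y hy)
  have hd1 : deriv (fun z => (φ z * deriv ψ z - deriv φ z * ψ z) / φ z) =ᶠ[nhds x] W1 := by
    filter_upwards [hI.mem_nhds hx] with y hy
    exact (hw1 y hy).deriv
  -- second derivative
  have hnum : HasDerivAt (fun y =>
      (Et - E) * (φ y * ψ y) * φ y
        - (φ y * deriv ψ y - deriv φ y * ψ y) * deriv φ y)
      (((Et - E) * (deriv φ x * ψ x + φ x * deriv ψ x) * φ x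
        + (Et - E) * (φ x * ψ x) * deriv φ x)
      - ((deriv φ x * deriv ψ x + φ x * deriv (deriv ψ) x
          - (deriv (deriv φ) x * ψ x + deriv φ x * deriv ψ x)) * deriv φ x
        + (φ x * deriv ψ x - deriv φ x * ψ x) * deriv (deriv φ) x)) x :=
    ((((hφa x hx).mul (hψa x hx)).const_mul (Et - E)).mul (hφa x hx)).sub
      ((((hφa x hx).mul (hψ1a x hx)).sub ((hφ1a x hx).mul (hψa x hx))).mul (hφ1a x hx))
  have hden : HasDerivAt (fun y => (φ y) ^ 2) (2 * φ x ^ 1 * deriv φ x) x :=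
    (hφa x hx).pow 2
  have hW1x := hnum.fun_div hden (pow_ne_zero 2 (hφ0 x hx))
  have hdd : deriv (deriv (fun z => (φ z * deriv ψ z - deriv φ z * ψ z) / φ z)) x
      = deriv W1 x := hd1.deriv_eq
  rw [hdd, hW1def, hW1x.deriv]
  have h1 : deriv (deriv ψ) x = U x * ψ x - E * ψ x := by have := heψ x hx; linarith
  have h2 : deriv (deriv φ) x = U x * φ x - Et * φ x := by have := heφ x hx; linarith
  rw [h1, h2]
  have hp := hφ0 x hx
  field_simp
  ring
end

section
/- Let U be a smooth real-valued function on an open interval I, let Ẽ be a real constant, and let φ be a smooth real function on I satisfying −φ''(x) + U(x)φ(x) = Ẽφ(x) on I, with φ(x) ≠ 0 for all x ∈ I. Then the function 1/φ satisfies −(1/φ)''(x) + U^{[1]}(x)(1/φ)(x) = Ẽ·(1/φ)(x) on I, where U^{[1]}(x) = U(x) − 2(φ''(x)φ(x) − φ'(x)²)/φ(x)². -/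
/-- the reciprocal of the seed solution solves the Darboux-deformed
Schrödinger equation with the same energy. -/
theorem darboux_reciprocal_seed
    (a b : ℝ) (U φ : ℝ → ℝ) (Et : ℝ)
    (hU : ContDiffOn ℝ (⊤ : ℕ∞) U (Set.Ioo a b))
    (hφ : ContDiffOn ℝ (⊤ : ℕ∞) φ (Set.Ioo a b))
    (heφ : ∀ x ∈ Set.Ioo a b, -(deriv (deriv φ) x) + U x * φ x = Et * φ x)
    (hφ0 : ∀ x ∈ Set.Ioo a b, φ x ≠ 0) :
    ∀ x ∈ Set.Ioo a b,
      -(deriv (deriv (fun y => 1 / φ y)) x)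
        + (U x - 2 * (deriv (deriv φ) x * φ x - (deriv φ x) ^ 2) / (φ x) ^ 2)
          * (1 / φ x)
      = Et * (1 / φ x) := by
  intro x hx
  have hs : IsOpen (Set.Ioo a b) := isOpen_Ioo
  have hmem : Set.Ioo a b ∈ nhds x := hs.mem_nhds hx
  have hφd : ∀ y ∈ Set.Ioo a b, HasDerivAt φ (deriv φ y) y := by
    intro y hy
    exact ((hφ.contDiffAt (hs.mem_nhds hy)).differentiableAt (by simp)).hasDerivAt
  have h1 : ∀ y ∈ Set.Ioo a b,
      HasDerivAt (fun z => 1 / φ z) (-(deriv φ y) / (φ y) ^ 2) y := by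
    intro y hy
    simpa [one_div, Pi.inv_def] using (hφd y hy).inv (hφ0 y hy)
  have heq : deriv (fun z => 1 / φ z) =ᶠ[nhds x] fun y => -(deriv φ y) / (φ y) ^ 2 := by
    filter_upwards [hmem] with y hy
    exact (h1 y hy).deriv
  have hφ' : ContDiffOn ℝ (⊤ : ℕ∞) (deriv φ) (Set.Ioo a b) := hφ.deriv_of_isOpen hs (by simp)
  have hφ'' : HasDerivAt (deriv φ) (deriv (deriv φ) x) x :=
    ((hφ'.contDiffAt hmem).differentiableAt (by simp)).hasDerivAt
  have hden : HasDerivAt (fun y => (φ y) ^ 2) (2 * φ x * deriv φ x) x := by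
    have := (hφd x hx).pow 2
    simpa [mul_comm, mul_assoc, Pi.pow_def] using this
  have hnum : HasDerivAt (fun y => -(deriv φ y)) (-(deriv (deriv φ) x)) x := hφ''.neg
  have hx0 : (φ x) ^ 2 ≠ 0 := pow_ne_zero _ (hφ0 x hx)
  have h2 : HasDerivAt (fun y => -(deriv φ y) / (φ y) ^ 2)
      ((-(deriv (deriv φ) x) * (φ x) ^ 2 - (-(deriv φ x)) * (2 * φ x * deriv φ x))
        / ((φ x) ^ 2) ^ 2) x := hnum.div hden hx0
  have hd2 : deriv (deriv (fun z => 1 / φ z)) x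
      = (-(deriv (deriv φ) x) * (φ x) ^ 2 - (-(deriv φ x)) * (2 * φ x * deriv φ x))
        / ((φ x) ^ 2) ^ 2 := by
    rw [heq.deriv_eq]
    exact h2.deriv
  have hpp : deriv (deriv φ) x = (U x - Et) * φ x := by
    have := heφ x hx; linarith
  rw [hd2, hpp]
  have h0 : φ x ≠ 0 := hφ0 x hx
  field_simp
  ring
end

section
/- Let f_1, …, f_n, g, h be smooth real functions on an open interval I, with n ≥ 0. Then for all x ∈ I, W[ W[f_1,…,f_n,g], W[f_1,…,f_n,h] ](x) = W[f_1,…,f_n](x) · W[f_1,…,f_n,g,h](x), where the outer Wronskian on the left is the 2×2 Wronskian of the two functions x ↦ W[f_1,…,f_n,g](x) and x ↦ W[f_1,…,f_n,h](x). -/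
open Matrix Finset

/-- The Wronskian of `n` real functions: `W[f₁,…,fₙ](x) = det(f_k^{(j-1)}(x))`. -/
noncomputable def wronskian (n : ℕ) (f : Fin n → ℝ → ℝ) (x : ℝ) : ℝ :=
  Matrix.det (Matrix.of fun j k : Fin n => iteratedDeriv (j : ℕ) (f k) x)


lemma hasDerivAt_iteratedDeriv {a b x : ℝ} {u : ℝ → ℝ}
    (hu : ContDiffOn ℝ (⊤ : ℕ∞) u (Set.Ioo a b)) (hx : x ∈ Set.Ioo a b) (j : ℕ) :
    HasDerivAt (iteratedDeriv j u) (iteratedDeriv (j + 1) u x) x := by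
  set s := Set.Ioo a b with hsdef
  have hs : IsOpen s := isOpen_Ioo
  have hmem : s ∈ nhds x := hs.mem_nhds hx
  have heq : ∀ m : ℕ, ∀ y ∈ s, iteratedDerivWithin m u s y = iteratedDeriv m u y := by
    intro m y hy
    rw [iteratedDerivWithin_eq_iteratedFDerivWithin, iteratedDeriv_eq_iteratedFDeriv,
      iteratedFDerivWithin_of_isOpen m hs hy]
  have hdW : DifferentiableWithinAt ℝ (iteratedDerivWithin j u s) s x :=
    hu.differentiableOn_iteratedDerivWithin (by exact_mod_cast lt_top_iff_ne_top.2 (by simp))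
      hs.uniqueDiffOn x hx
  have hdA : DifferentiableAt ℝ (iteratedDerivWithin j u s) x := hdW.differentiableAt hmem
  have hval : deriv (iteratedDerivWithin j u s) x = iteratedDeriv (j + 1) u x := by
    rw [← derivWithin_of_isOpen hs hx, ← iteratedDerivWithin_succ,
      heq _ x hx]
  have h1 : HasDerivAt (iteratedDerivWithin j u s) (iteratedDeriv (j + 1) u x) x := by
    have := hdA.hasDerivAt; rwa [hval] at this
  exact h1.congr_of_eventuallyEq (Filter.eventuallyEq_of_mem hmem fun y hy => (heq j y hy).symm)


lemma hasDerivAt_detfun {m : ℕ} (M : Fin m → Fin m → ℝ → ℝ) (M' : Fin m → Fin m → ℝ) {x : ℝ}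
    (hM : ∀ i j, HasDerivAt (M i j) (M' i j) x) :
    HasDerivAt (fun y => Matrix.det (Matrix.of fun i j => M i j y))
      (∑ i, Matrix.det ((Matrix.of fun i j => M i j x).updateRow i (fun j => M' i j))) x := by
  have hσ : ∀ σ : Equiv.Perm (Fin m), HasDerivAt (fun y => ∏ i, M (σ i) i y)
      (∑ i, (∏ j ∈ univ.erase i, M (σ j) j x) * M' (σ i) i) x := by
    intro σ
    simpa [smul_eq_mul] using HasDerivAt.fun_finsetProd (u := univ)
      (f := fun i y => M (σ i) i y) (f' := fun i => M' (σ i) i) (x := x)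
      (fun i _ => hM _ _)
  have hdet : HasDerivAt (fun y => Matrix.det (Matrix.of fun i j => M i j y))
      (∑ σ : Equiv.Perm (Fin m),
        (Equiv.Perm.sign σ : ℝ) * ∑ i, (∏ j ∈ univ.erase i, M (σ j) j x) * M' (σ i) i) x := by
    have hfun : (fun y => Matrix.det (Matrix.of fun i j => M i j y))
        = fun y => ∑ σ : Equiv.Perm (Fin m), (Equiv.Perm.sign σ : ℝ) * ∏ i, M (σ i) i y := by
      funext y; rw [Matrix.det_apply]
      simp [Units.smul_def, zsmul_eq_mul]
    rw [hfun]
    exact HasDerivAt.fun_sum fun σ _ => (hσ σ).const_mul _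
  convert hdet using 1
  have key : ∀ σ : Equiv.Perm (Fin m),
      ∑ i, (Equiv.Perm.sign σ : ℝ) * ∏ j, ((Matrix.of fun i j => M i j x).updateRow i
        (fun j => M' i j)) (σ j) j
      = (Equiv.Perm.sign σ : ℝ) * ∑ i, (∏ j ∈ univ.erase i, M (σ j) j x) * M' (σ i) i := by
    intro σ
    rw [← Finset.mul_sum]
    congr 1
    rw [← Equiv.sum_comp σ (fun i => ∏ j, ((Matrix.of fun i j => M i j x).updateRow i
        (fun j => M' i j)) (σ j) j)]
    refine Finset.sum_congr rfl fun i _ => ?_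
    have h1 : ∀ j, ((Matrix.of fun i j => M i j x).updateRow (σ i) (fun j => M' (σ i) j)) (σ j) j
        = if j = i then M' (σ i) j else M (σ j) j x := by
      intro j
      rw [Matrix.updateRow_apply]
      simp [σ.injective.eq_iff]
    simp only [h1]
    rw [← Finset.mul_prod_erase univ _ (mem_univ i), if_pos rfl, mul_comm]
    congr 1
    exact Finset.prod_congr rfl fun j hj => if_neg (Finset.mem_erase.1 hj).1
  calc ∑ i, Matrix.det ((Matrix.of fun i j => M i j x).updateRow i (fun j => M' i j))
      = ∑ i, ∑ σ : Equiv.Perm (Fin m), (Equiv.Perm.sign σ : ℝ)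
          * ∏ j, ((Matrix.of fun i j => M i j x).updateRow i (fun j => M' i j)) (σ j) j := by
        refine Finset.sum_congr rfl fun i _ => ?_
        rw [Matrix.det_apply]; simp [Units.smul_def, zsmul_eq_mul]
    _ = ∑ σ : Equiv.Perm (Fin m), ∑ i, (Equiv.Perm.sign σ : ℝ)
          * ∏ j, ((Matrix.of fun i j => M i j x).updateRow i (fun j => M' i j)) (σ j) j :=
        Finset.sum_comm
    _ = _ := Finset.sum_congr rfl fun σ _ => key σ


/-- `W'`: the derivative of a Wronskian of `m+1` functions: last row bumped to order `m+1`. -/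
noncomputable def wronskianD (m : ℕ) (u : Fin (m + 1) → ℝ → ℝ) (x : ℝ) : ℝ :=
  Matrix.det (Matrix.of fun j k : Fin (m + 1) =>
    iteratedDeriv (if (j : ℕ) < m then (j : ℕ) else m + 1) (u k) x)

lemma hasDerivAt_wronskian {a b x : ℝ} {m : ℕ} (u : Fin (m + 1) → ℝ → ℝ)
    (hu : ∀ k, ContDiffOn ℝ (⊤ : ℕ∞) (u k) (Set.Ioo a b)) (hx : x ∈ Set.Ioo a b) :
    HasDerivAt (fun y => wronskian (m + 1) u y) (wronskianD m u x) x := by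
  have h := hasDerivAt_detfun (fun j k y => iteratedDeriv (j : ℕ) (u k) y)
    (fun j k => iteratedDeriv ((j : ℕ) + 1) (u k) x)
    (fun j k => hasDerivAt_iteratedDeriv (hu k) hx _)
  have hsum : (∑ i, Matrix.det ((Matrix.of fun (j k : Fin (m + 1)) =>
        iteratedDeriv (j : ℕ) (u k) x).updateRow i
        (fun k => iteratedDeriv ((i : ℕ) + 1) (u k) x))) = wronskianD m u x := by
    rw [Finset.sum_eq_single (Fin.last m)]
    · congr 1
      ext j k
      rw [Matrix.updateRow_apply]
      by_cases hj : j = Fin.last m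
      · subst hj; simp [wronskianD, Fin.val_last]
      · have : (j : ℕ) < m := lt_of_le_of_ne (Nat.lt_succ_iff.1 j.isLt)
          (fun hh => hj (Fin.ext hh))
        simp [hj, this]
    · intro i _ hi
      have him : (i : ℕ) < m := lt_of_le_of_ne (Nat.lt_succ_iff.1 i.isLt)
        (fun hh => hi (Fin.ext hh))
      apply Matrix.det_zero_of_row_eq (i := i) (j := ⟨(i : ℕ) + 1, by omega⟩)
      · exact fun hh => by simpa using congrArg Fin.val hh
      · funext k
        rw [Matrix.updateRow_self]
        rw [Matrix.updateRow_apply, if_neg (by exact fun hh => by simpa using congrArg Fin.val hh)]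
        simp
    · simp
  rw [← hsum]
  exact h


variable {m : Type*} [Fintype m] [DecidableEq m]

/-- The 2×2 corner block of the adjugate. -/
def adjY {R : Type*} [CommRing R] (A : Matrix (m ⊕ Fin 2) (m ⊕ Fin 2) R) :
    Matrix (Fin 2) (Fin 2) R :=
  Matrix.of fun i j => adjugate A (Sum.inr i) (Sum.inr j)

lemma adjY_key0 {R : Type*} [CommRing R] (A : Matrix (m ⊕ Fin 2) (m ⊕ Fin 2) R) :
    A.det * (adjY A).det = (A.toBlocks₁₁).det * A.det ^ 2 := by
  classical
  set X : Matrix m (Fin 2) R := Matrix.of fun i j => adjugate A (Sum.inl i) (Sum.inr j) with hX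
  set B : Matrix (m ⊕ Fin 2) (m ⊕ Fin 2) R := fromBlocks 1 X 0 (adjY A) with hB
  have hdetB : B.det = (adjY A).det := by
    rw [hB, det_fromBlocks_zero₂₁, det_one, one_mul]
  have hadj := mul_adjugate A
  have h12 : A.toBlocks₁₁ * X + A.toBlocks₁₂ * adjY A = 0 := by
    ext i j
    have := congrFun (congrFun hadj (Sum.inl i)) (Sum.inr j)
    rw [Matrix.mul_apply] at this
    rw [Fintype.sum_sum_type] at this
    simp only [Matrix.add_apply, Matrix.mul_apply, Matrix.zero_apply]
    simpa [toBlocks₁₁, toBlocks₁₂, adjY, X, Matrix.smul_apply, Matrix.one_apply] using this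
  have h22 : A.toBlocks₂₁ * X + A.toBlocks₂₂ * adjY A = A.det • 1 := by
    ext i j
    have := congrFun (congrFun hadj (Sum.inr i)) (Sum.inr j)
    rw [Matrix.mul_apply] at this
    rw [Fintype.sum_sum_type] at this
    simp only [Matrix.add_apply, Matrix.mul_apply, Matrix.smul_apply, Matrix.one_apply,
      smul_eq_mul]
    simpa [toBlocks₂₁, toBlocks₂₂, adjY, X, Matrix.smul_apply, Matrix.one_apply,
      Sum.inr.injEq, smul_eq_mul] using this
  have hAB : A * B = fromBlocks A.toBlocks₁₁ 0 A.toBlocks₂₁ (A.det • 1) := by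
    conv_lhs => rw [← fromBlocks_toBlocks A]
    rw [hB, fromBlocks_multiply]
    rw [Matrix.mul_one, Matrix.mul_zero, Matrix.mul_one, Matrix.mul_zero, add_zero, add_zero,
      h12, h22]
  have hdetAB : (A * B).det = (A.toBlocks₁₁).det * A.det ^ 2 := by
    rw [hAB, det_fromBlocks_zero₁₂, det_smul, det_one, mul_one]
    norm_num [Fintype.card_fin]
  rw [← hdetAB, det_mul, hdetB]

lemma adjY_key {R : Type*} [CommRing R] (A : Matrix (m ⊕ Fin 2) (m ⊕ Fin 2) R) :
    (adjY A).det = A.det * (A.toBlocks₁₁).det := by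
  classical
  -- generic matrix argument
  let G := mvPolynomialX (m ⊕ Fin 2) (m ⊕ Fin 2) ℤ
  have hG : (adjY G).det = G.det * (G.toBlocks₁₁).det := by
    have h0 := adjY_key0 G
    have hne : G.det ≠ 0 := det_mvPolynomialX_ne_zero _ ℤ
    apply mul_left_cancel₀ hne
    rw [h0]; ring
  let φ : MvPolynomial ((m ⊕ Fin 2) × (m ⊕ Fin 2)) ℤ →ₐ[ℤ] R :=
    MvPolynomial.aeval fun p => A p.1 p.2
  have hmap : φ.mapMatrix G = A := mvPolynomialX_mapMatrix_aeval ℤ A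
  have hadj : adjugate A = (adjugate G).map φ := by
    rw [← hmap, ← AlgHom.map_adjugate]; rfl
  have hY : adjY A = (adjY G).map ⇑φ := by
    ext i j
    simp [adjY, hadj, Matrix.map_apply]
  have hB : A.toBlocks₁₁ = (G.toBlocks₁₁).map ⇑φ := by
    ext i j
    rw [← hmap]
    simp [toBlocks₁₁, AlgHom.mapMatrix_apply, Matrix.map_apply]
  calc (adjY A).det = ((adjY G).map ⇑φ).det := by rw [hY]
    _ = φ (adjY G).det := (RingHom.map_det φ.toRingHom _).symm
    _ = φ (G.det * G.toBlocks₁₁.det) := by rw [hG]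
    _ = φ G.det * φ G.toBlocks₁₁.det := map_mul _ _ _
    _ = A.det * (A.toBlocks₁₁).det := by
        rw [hB, ← hmap]
        exact congrArg₂ (· * ·) (RingHom.map_det φ.toRingHom G)
          (RingHom.map_det φ.toRingHom G.toBlocks₁₁)

/-- the fundamental Wronskian (Jacobi) identity
`W[W[f₁,…,fₙ,g], W[f₁,…,fₙ,h]] = W[f₁,…,fₙ] · W[f₁,…,fₙ,g,h]`. -/
theorem wronskian_jacobi_identity
    (a b : ℝ) (n : ℕ) (f : Fin n → ℝ → ℝ) (g h : ℝ → ℝ)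
    (hf : ∀ k, ContDiffOn ℝ (⊤ : ℕ∞) (f k) (Set.Ioo a b))
    (hg : ContDiffOn ℝ (⊤ : ℕ∞) g (Set.Ioo a b))
    (hh : ContDiffOn ℝ (⊤ : ℕ∞) h (Set.Ioo a b)) :
    ∀ x ∈ Set.Ioo a b,
      wronskian 2
        ![fun y => wronskian (n + 1) (Fin.snoc f g) y,
          fun y => wronskian (n + 1) (Fin.snoc f h) y] x
      = wronskian n f x * wronskian (n + 2) (Fin.snoc (Fin.snoc f g) h) x := by
  intro x hx
  classical
  set sg : Fin (n + 1) → ℝ → ℝ := Fin.snoc f g with hsgdef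
  set sh : Fin (n + 1) → ℝ → ℝ := Fin.snoc f h with hshdef
  set F : Fin (n + 2) → ℝ → ℝ := Fin.snoc sg h with hF
  set N : Matrix (Fin (n + 2)) (Fin (n + 2)) ℝ :=
    Matrix.of (fun j k : Fin (n + 2) => iteratedDeriv (j : ℕ) (F k) x) with hN
  set p : Fin (n + 2) := ⟨n, by omega⟩ with hp
  set q : Fin (n + 2) := Fin.last (n + 1) with hq
  -- column identities
  have hcol1 : ∀ k : Fin (n + 1), F (Fin.castSucc k) = sg k := by
    intro k; rw [hF]; exact Fin.snoc_castSucc _ _ _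
  have hcolp : ∀ k : Fin (n + 1), F (p.succAbove k) = sh k := by
    intro k
    by_cases hc : (k : ℕ) < n
    · have hlt : Fin.castSucc k < p := by rw [Fin.lt_def]; simpa using hc
      rw [Fin.succAbove, if_pos hlt]
      have hk : k = Fin.castSucc (⟨(k : ℕ), hc⟩ : Fin n) := by ext; simp
      rw [hcol1, hk, hsgdef, hshdef, Fin.snoc_castSucc, Fin.snoc_castSucc]
    · have hk : k = Fin.last n := by ext; have := k.isLt; simp; omega
      have hlt : ¬ Fin.castSucc k < p := by rw [Fin.lt_def]; simpa using hc
      rw [Fin.succAbove, if_neg hlt]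
      have hsucc : Fin.succ k = q := by ext; simp [hk, hq]
      rw [hsucc, hk]
      rw [hF, hshdef, hq]
      rw [Fin.snoc_last, Fin.snoc_last]
  have hrowp : ∀ j : Fin (n + 1), ((p.succAbove j : Fin (n + 2)) : ℕ)
      = if (j : ℕ) < n then (j : ℕ) else n + 1 := by
    intro j
    by_cases hc : (j : ℕ) < n
    · have hlt : Fin.castSucc j < p := by rw [Fin.lt_def]; simpa using hc
      rw [Fin.succAbove, if_pos hlt]; simp [hc]
    · have hlt : ¬ Fin.castSucc j < p := by rw [Fin.lt_def]; simpa using hc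
      rw [Fin.succAbove, if_neg hlt]
      have := j.isLt
      simp [hc, Fin.val_succ]; omega
  have hqsA : (q.succAbove : Fin (n + 1) → Fin (n + 2)) = Fin.castSucc := by
    rw [hq]; exact Fin.succAbove_last
  -- the four minors
  have Mgg : N.submatrix q.succAbove q.succAbove
      = Matrix.of (fun j k : Fin (n + 1) => iteratedDeriv (j : ℕ) (sg k) x) := by
    ext j k; rw [hqsA]; simp [hN, hcol1]
  have Mgh : N.submatrix q.succAbove p.succAbove
      = Matrix.of (fun j k : Fin (n + 1) => iteratedDeriv (j : ℕ) (sh k) x) := by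
    ext j k; rw [hqsA]; simp [hN, hcolp]
  have Mdg : N.submatrix p.succAbove q.succAbove
      = Matrix.of (fun j k : Fin (n + 1) =>
          iteratedDeriv (if (j : ℕ) < n then (j : ℕ) else n + 1) (sg k) x) := by
    ext j k; rw [hqsA]; simp [hN, hrowp, hcol1]
  have Mdh : N.submatrix p.succAbove p.succAbove
      = Matrix.of (fun j k : Fin (n + 1) =>
          iteratedDeriv (if (j : ℕ) < n then (j : ℕ) else n + 1) (sh k) x) := by
    ext j k; simp [hN, hrowp, hcolp]
  -- signs
  have hpv : (p : ℕ) = n := rfl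
  have hqv : (q : ℕ) = n + 1 := rfl
  have sqq : ((-1 : ℝ)) ^ ((q : ℕ) + (q : ℕ)) = 1 := Even.neg_one_pow ⟨n + 1, by omega⟩
  have spp : ((-1 : ℝ)) ^ ((p : ℕ) + (p : ℕ)) = 1 := Even.neg_one_pow ⟨n, by omega⟩
  have spq : ((-1 : ℝ)) ^ ((q : ℕ) + (p : ℕ)) = -1 := Odd.neg_one_pow ⟨n, by omega⟩
  have sqp : ((-1 : ℝ)) ^ ((p : ℕ) + (q : ℕ)) = -1 := Odd.neg_one_pow ⟨n, by omega⟩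
  -- the four adjugate entries; `adjugate N i j` removes row `j` and column `i`
  have hWg : adjugate N q q = wronskian (n + 1) sg x := by
    rw [adjugate_fin_succ_eq_det_submatrix, sqq, one_mul, Mgg]; rfl
  have hWh : adjugate N p q = -(wronskian (n + 1) sh x) := by
    rw [adjugate_fin_succ_eq_det_submatrix, spq, Mgh, wronskian]; ring
  have hWg' : adjugate N q p = -(wronskianD n sg x) := by
    rw [adjugate_fin_succ_eq_det_submatrix, sqp, Mdg, wronskianD]; ring
  have hWh' : adjugate N p p = wronskianD n sh x := by
    rw [adjugate_fin_succ_eq_det_submatrix, spp, one_mul, Mdh]; rfl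
  -- apply the Desnanot–Jacobi key lemma
  set e : Fin n ⊕ Fin 2 ≃ Fin (n + 2) := finSumFinEquiv with he
  have hA := adjY_key (N.submatrix e e)
  have hdetA : (N.submatrix ⇑e ⇑e).det = wronskian (n + 2) F x := by
    rw [det_submatrix_equiv_self]; rfl
  have hblock : ((N.submatrix ⇑e ⇑e).toBlocks₁₁).det = wronskian n f x := by
    have : (N.submatrix ⇑e ⇑e).toBlocks₁₁
        = Matrix.of (fun i j : Fin n => iteratedDeriv (i : ℕ) (f j) x) := by
      ext i j
      have h1 : e (Sum.inl i) = Fin.castAdd 2 i := finSumFinEquiv_apply_left i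
      have h2 : e (Sum.inl j) = Fin.castAdd 2 j := finSumFinEquiv_apply_left j
      have h3 : (Fin.castAdd 2 j : Fin (n + 2))
          = Fin.castSucc (Fin.castSucc (j : Fin n)) := by ext; simp
      simp only [toBlocks₁₁, Matrix.of_apply, submatrix_apply, h1, h2, h3, hN]
      rw [hcol1, hsgdef]
      rw [Fin.snoc_castSucc]
      rfl
    rw [this]; rfl
  have hepr0 : e (Sum.inr 0) = p := by
    rw [he]; ext; simp [finSumFinEquiv_apply_right, hp]
  have hepr1 : e (Sum.inr 1) = q := by
    rw [he]; ext; simp [finSumFinEquiv_apply_right, hq]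
  have hadjsub : adjugate (N.submatrix ⇑e ⇑e) = (adjugate N).submatrix ⇑e ⇑e :=
    adjugate_submatrix_equiv_self e N
  have hYdet : (adjY (N.submatrix ⇑e ⇑e)).det
      = wronskian (n + 1) sg x * wronskianD n sh x
        - wronskian (n + 1) sh x * wronskianD n sg x := by
    rw [Matrix.det_fin_two]
    simp only [adjY, Matrix.of_apply, hadjsub, submatrix_apply, hepr0, hepr1]
    rw [hWg, hWh, hWg', hWh']; ring
  -- compute the LHS 2×2 Wronskian
  have hsg : ∀ k, ContDiffOn ℝ (⊤ : ℕ∞) (sg k) (Set.Ioo a b) := by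
    intro k
    refine Fin.lastCases ?_ ?_ k
    · simpa [hsgdef] using hg
    · intro i; simpa [hsgdef, hshdef] using hf i
  have hsh : ∀ k, ContDiffOn ℝ (⊤ : ℕ∞) (sh k) (Set.Ioo a b) := by
    intro k
    refine Fin.lastCases ?_ ?_ k
    · simpa [hshdef] using hh
    · intro i; simpa [hsgdef, hshdef] using hf i
  have hdg : deriv (fun y => wronskian (n + 1) sg y) x
      = wronskianD n sg x := (hasDerivAt_wronskian _ hsg hx).deriv
  have hdh : deriv (fun y => wronskian (n + 1) sh y) x
      = wronskianD n sh x := (hasDerivAt_wronskian _ hsh hx).deriv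
  have hLHS : wronskian 2
      ![fun y => wronskian (n + 1) sg y,
        fun y => wronskian (n + 1) sh y] x
      = wronskian (n + 1) sg x * wronskianD n sh x
        - wronskian (n + 1) sh x * wronskianD n sg x := by
    rw [wronskian, Matrix.det_fin_two]
    simp only [Matrix.of_apply]
    norm_num [iteratedDeriv_zero, iteratedDeriv_one, hdg, hdh]
  rw [hLHS, ← hYdet, hA, hdetA, hblock, mul_comm]
end

section
/- Let η be a smooth real function on an open interval I, let F_1, …, F_n be smooth real functions on an open interval containing η(I), and set f_j(x) = F_j(η(x)). Then for all x ∈ I, W[f_1, f_2, …, f_n](x) = (η'(x))^{n(n−1)/2} · W[F_1, F_2, …, F_n](η(x)). -/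
/-- Coefficients in the Faà di Bruno expansion of iterated derivatives of `G ∘ η`. -/
noncomputable def wcoef (η : ℝ → ℝ) : ℕ → ℕ → ℝ → ℝ
  | 0, 0 => fun _ => 1
  | 0, _+1 => fun _ => 0
  | j+1, 0 => deriv (wcoef η j 0)
  | j+1, i+1 => fun x => deriv (wcoef η j (i+1)) x + wcoef η j i x * deriv η x

lemma wcoef_zero_of_lt (η : ℝ → ℝ) : ∀ j i, j < i → wcoef η j i = fun _ => 0 := by
  intro j
  induction j with
  | zero =>
    intro i hi
    match i, hi with
    | (i+1), _ => rfl
  | succ j ih =>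
    intro i hi
    match i, hi with
    | (i+1), hi =>
      have h1 : wcoef η j (i+1) = fun _ => 0 := ih _ (by omega)
      have h2 : wcoef η j i = fun _ => 0 := ih _ (by omega)
      show (fun x => deriv (wcoef η j (i+1)) x + wcoef η j i x * deriv η x) = _
      funext x
      simp [h1, h2]

lemma wcoef_diag (η : ℝ → ℝ) (j : ℕ) (x : ℝ) : wcoef η j j x = (deriv η x) ^ j := by
  induction j with
  | zero => simp [wcoef]
  | succ j ih =>
    show deriv (wcoef η j (j+1)) x + wcoef η j j x * deriv η x = _
    rw [wcoef_zero_of_lt η j (j+1) (by omega), deriv_const]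
    rw [ih]; ring

lemma wcoef_smooth {a b : ℝ} {η : ℝ → ℝ} (hη : ContDiffOn ℝ (⊤ : ℕ∞) η (Set.Ioo a b)) :
    ∀ j i, ContDiffOn ℝ (⊤ : ℕ∞) (wcoef η j i) (Set.Ioo a b) := by
  have hd : ContDiffOn ℝ (⊤ : ℕ∞) (deriv η) (Set.Ioo a b) :=
    hη.deriv_of_isOpen isOpen_Ioo (by simp)
  intro j
  induction j with
  | zero =>
    intro i
    match i with
    | 0 => exact contDiffOn_const
    | (i+1) => exact contDiffOn_const
  | succ j ih =>
    intro i
    match i with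
    | 0 => exact (ih 0).deriv_of_isOpen isOpen_Ioo (by simp)
    | (i+1) =>
      exact ((ih (i+1)).deriv_of_isOpen isOpen_Ioo (by simp)).add ((ih i).mul hd)

lemma iteratedDeriv_contDiffOn {s : Set ℝ} {G : ℝ → ℝ} (hs : IsOpen s)
    (hG : ContDiffOn ℝ (⊤ : ℕ∞) G s) (i : ℕ) : ContDiffOn ℝ (⊤ : ℕ∞) (iteratedDeriv i G) s := by
  induction i with
  | zero => simpa [iteratedDeriv_zero] using hG
  | succ i ih =>
    rw [iteratedDeriv_succ]
    exact ih.deriv_of_isOpen hs (by simp)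

lemma key_expansion {a b c d : ℝ} {η : ℝ → ℝ}
    (hη : ContDiffOn ℝ (⊤ : ℕ∞) η (Set.Ioo a b))
    (hηmap : η '' Set.Ioo a b ⊆ Set.Ioo c d) :
    ∀ (j : ℕ) (G : ℝ → ℝ), ContDiffOn ℝ (⊤ : ℕ∞) G (Set.Ioo c d) →
      ∀ x ∈ Set.Ioo a b, iteratedDeriv j (fun y => G (η y)) x
        = ∑ i ∈ Finset.range (j+1), wcoef η j i x * iteratedDeriv i G (η x) := by
  intro j
  induction j with
  | zero =>
    intro G _ x _
    simp [wcoef]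
  | succ j ih =>
    intro G hG x hx
    have hmem : η x ∈ Set.Ioo c d := hηmap ⟨x, hx, rfl⟩
    -- differentiability facts at x
    have hηdiff : HasDerivAt η (deriv η x) x := by
      have : DifferentiableAt ℝ η x :=
        ((hη.contDiffAt (isOpen_Ioo.mem_nhds hx)).differentiableAt (by simp))
      exact this.hasDerivAt
    have hGdiff : ∀ i : ℕ, HasDerivAt (iteratedDeriv i G)
        (iteratedDeriv (i+1) G (η x)) (η x) := by
      intro i
      have h1 : DifferentiableAt ℝ (iteratedDeriv i G) (η x) :=
        (((iteratedDeriv_contDiffOn isOpen_Ioo hG i).contDiffAt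
          (isOpen_Ioo.mem_nhds hmem)).differentiableAt (by simp))
      have := h1.hasDerivAt
      rwa [← iteratedDeriv_succ] at this
    have hcdiff : ∀ j' i : ℕ, HasDerivAt (wcoef η j' i) (deriv (wcoef η j' i) x) x := by
      intro j' i
      exact (((wcoef_smooth hη j' i).contDiffAt
        (isOpen_Ioo.mem_nhds hx)).differentiableAt (by simp)).hasDerivAt
    -- the identity from the inductive hypothesis holds near x
    have heq : iteratedDeriv j (fun y => G (η y)) =ᶠ[nhds x]
        (fun y => ∑ i ∈ Finset.range (j+1), wcoef η j i y * iteratedDeriv i G (η y)) := by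
      filter_upwards [isOpen_Ioo.mem_nhds hx] with y hy
      exact ih G hG y hy
    rw [iteratedDeriv_succ, heq.deriv_eq]
    -- compute the derivative of the sum
    have hder : HasDerivAt
        (fun y => ∑ i ∈ Finset.range (j+1), wcoef η j i y * iteratedDeriv i G (η y))
        (∑ i ∈ Finset.range (j+1),
          (deriv (wcoef η j i) x * iteratedDeriv i G (η x)
            + wcoef η j i x * (iteratedDeriv (i+1) G (η x) * deriv η x))) x := by
      apply HasDerivAt.fun_sum
      intro i _
      exact (hcdiff j i).mul ((hGdiff i).comp x hηdiff)
    rw [hder.deriv]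
    -- algebraic rearrangement
    rw [Finset.sum_add_distrib]
    rw [Finset.sum_range_succ' (fun i => wcoef η (j+1) i x * iteratedDeriv i G (η x)) (j+1)]
    have e0 : wcoef η (j+1) 0 x * iteratedDeriv 0 G (η x)
        = deriv (wcoef η j 0) x * iteratedDeriv 0 G (η x) := rfl
    have e1 : ∀ i : ℕ, wcoef η (j+1) (i+1) x * iteratedDeriv (i+1) G (η x)
        = deriv (wcoef η j (i+1)) x * iteratedDeriv (i+1) G (η x)
          + wcoef η j i x * (iteratedDeriv (i+1) G (η x) * deriv η x) := by
      intro i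
      show (deriv (wcoef η j (i+1)) x + wcoef η j i x * deriv η x) * _ = _
      ring
    rw [e0, Finset.sum_congr rfl (fun i _ => e1 i), Finset.sum_add_distrib]
    have e2 : ∑ i ∈ Finset.range (j+1), deriv (wcoef η j (i+1)) x * iteratedDeriv (i+1) G (η x)
        = ∑ i ∈ Finset.range j, deriv (wcoef η j (i+1)) x * iteratedDeriv (i+1) G (η x) := by
      rw [Finset.sum_range_succ]
      rw [wcoef_zero_of_lt η j (j+1) (by omega)]
      simp
    rw [e2]
    have e3 : ∑ i ∈ Finset.range (j+1), deriv (wcoef η j i) x * iteratedDeriv i G (η x)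
        = ∑ i ∈ Finset.range j, deriv (wcoef η j (i+1)) x * iteratedDeriv (i+1) G (η x)
          + deriv (wcoef η j 0) x * iteratedDeriv 0 G (η x) :=
      Finset.sum_range_succ' _ j
    rw [e3]
    ring

/-- behaviour of the Wronskian under a change of variable `x → η(x)`:
`W[F₁∘η,…,Fₙ∘η](x) = (η'(x))^{n(n-1)/2} · W[F₁,…,Fₙ](η(x))`. -/
theorem wronskian_change_of_variable
    (a b c d : ℝ) (n : ℕ) (η : ℝ → ℝ) (F : Fin n → ℝ → ℝ)
    (hη : ContDiffOn ℝ (⊤ : ℕ∞) η (Set.Ioo a b))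
    (hηmap : η '' Set.Ioo a b ⊆ Set.Ioo c d)
    (hF : ∀ j, ContDiffOn ℝ (⊤ : ℕ∞) (F j) (Set.Ioo c d)) :
    ∀ x ∈ Set.Ioo a b,
      wronskian n (fun j y => F j (η y)) x
        = (deriv η x) ^ (n * (n - 1) / 2) * wronskian n F (η x) := by
  intro x hx
  set L : Matrix (Fin n) (Fin n) ℝ := Matrix.of fun j i : Fin n => wcoef η j i x with hL
  have hfactor : (Matrix.of fun j k : Fin n =>
      iteratedDeriv (j : ℕ) (fun y => F k (η y)) x)
      = L * (Matrix.of fun i k : Fin n => iteratedDeriv (i : ℕ) (F k) (η x)) := by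
    ext j k
    rw [Matrix.mul_apply]
    simp only [Matrix.of_apply]
    have hk := key_expansion hη hηmap (j : ℕ) (F k) (hF k) x hx
    rw [hk]
    simp only [hL, Matrix.of_apply]
    rw [Fin.sum_univ_eq_sum_range (fun i => wcoef η j i x * iteratedDeriv i (F k) (η x)) n]
    apply Finset.sum_subset
    · intro i hi
      simp only [Finset.mem_range] at hi ⊢
      have := j.isLt
      omega
    · intro i _ hi
      simp only [Finset.mem_range] at hi
      rw [wcoef_zero_of_lt η (j : ℕ) i (by omega)]
      simp
  have hdetL : L.det = (deriv η x) ^ (n * (n - 1) / 2) := by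
    have htri : L.BlockTriangular OrderDual.toDual := by
      intro j i hij
      simp only [OrderDual.toDual_lt_toDual] at hij
      show wcoef η (j : ℕ) (i : ℕ) x = 0
      rw [wcoef_zero_of_lt η (j : ℕ) (i : ℕ) (by exact_mod_cast hij)]
    rw [Matrix.det_of_lowerTriangular L htri]
    have : ∀ j : Fin n, L j j = (deriv η x) ^ (j : ℕ) := fun j => wcoef_diag η j x
    simp only [this]
    rw [Finset.prod_pow_eq_pow_sum]
    congr 1
    rw [Fin.sum_univ_eq_sum_range (fun i => i) n, Finset.sum_range_id]
  unfold wronskian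
  rw [hfactor, Matrix.det_mul, hdetL]
end

section
/- Let U be a smooth real function on an open interval I, let E, Ẽ_1, …, Ẽ_M be real constants, and let ψ, φ_1, …, φ_M be smooth real functions on I satisfying −ψ'' + Uψ = Eψ and −φ_j'' + Uφ_j = Ẽ_jφ_j on I for j = 1, …, M. Assume that for each s = 1, …, M the Wronskian W[φ_1, …, φ_s](x) is nonvanishing on I. Then the function ψ^{[M]}(x) = W[φ_1, …, φ_M, ψ](x) / W[φ_1, …, φ_M](x) satisfies −(ψ^{[M]})'' + U^{[M]}ψ^{[M]} = Eψ^{[M]} on I, where U^{[M]}(x) = U(x) − 2·d²/dx² log|W[φ_1, …, φ_M](x)|. -/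
namespace DCaux

variable {s : Set ℝ}

lemma evOn (hs : IsOpen s) {x : ℝ} (hx : x ∈ s) {f g : ℝ → ℝ}
    (h : ∀ y ∈ s, f y = g y) : f =ᶠ[nhds x] g :=
  Filter.eventuallyEq_of_mem (hs.mem_nhds hx) h

lemma diffAt (hs : IsOpen s) {f : ℝ → ℝ} (hf : ContDiffOn ℝ (⊤ : ℕ∞) f s) {x : ℝ} (hx : x ∈ s) :
    DifferentiableAt ℝ f x :=
  (hf.contDiffAt (hs.mem_nhds hx)).differentiableAt (by simp)

lemma hdAt (hs : IsOpen s) {f : ℝ → ℝ} (hf : ContDiffOn ℝ (⊤ : ℕ∞) f s) {x : ℝ} (hx : x ∈ s) :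
    HasDerivAt f (deriv f x) x :=
  (diffAt hs hf hx).hasDerivAt

lemma derivOn (hs : IsOpen s) {f : ℝ → ℝ} (hf : ContDiffOn ℝ (⊤ : ℕ∞) f s) :
    ContDiffOn ℝ (⊤ : ℕ∞) (deriv f) s :=
  hf.deriv_of_isOpen hs (m := (⊤ : ℕ∞)) (by simp)

lemma iterOn (hs : IsOpen s) {f : ℝ → ℝ} (hf : ContDiffOn ℝ (⊤ : ℕ∞) f s) (n : ℕ) :
    ContDiffOn ℝ (⊤ : ℕ∞) (iteratedDeriv n f) s := by
  induction n with
  | zero => simpa [iteratedDeriv_zero] using hf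
  | succ n ih => rw [iteratedDeriv_succ]; exact derivOn hs ih

lemma iter_congr {x : ℝ} {f g : ℝ → ℝ} (h : f =ᶠ[nhds x] g) (n : ℕ) :
    iteratedDeriv n f =ᶠ[nhds x] iteratedDeriv n g := by
  induction n with
  | zero => simpa [iteratedDeriv_zero] using h
  | succ n ih => rw [iteratedDeriv_succ, iteratedDeriv_succ]; exact ih.deriv

lemma wronskian_congr {x : ℝ} {n : ℕ} {f g : Fin n → ℝ → ℝ}
    (h : ∀ k, f k =ᶠ[nhds x] g k) : wronskian n f x = wronskian n g x := by
  unfold wronskian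
  apply congrArg Matrix.det
  ext j k
  exact (iter_congr (h k) (j : ℕ)).eq_of_nhds

lemma prodOn {ι : Type*} (t : Finset ι) (g : ι → ℝ → ℝ)
    (h : ∀ i ∈ t, ContDiffOn ℝ (⊤ : ℕ∞) (g i) s) :
    ContDiffOn ℝ (⊤ : ℕ∞) (fun x => ∏ i ∈ t, g i x) s := by
  classical
  induction t using Finset.cons_induction with
  | empty => simpa using contDiffOn_const
  | cons a t ha ih =>
    simp only [Finset.prod_cons]
    exact (h a (Finset.mem_cons_self a t)).mul
      (ih fun i hi => h i (Finset.mem_cons.2 (Or.inr hi)))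

lemma wronskianOn (hs : IsOpen s) {n : ℕ} {f : Fin n → ℝ → ℝ}
    (hf : ∀ k, ContDiffOn ℝ (⊤ : ℕ∞) (f k) s) : ContDiffOn ℝ (⊤ : ℕ∞) (wronskian n f) s := by
  have hrw : wronskian n f = fun x => ∑ σ : Equiv.Perm (Fin n),
      ((Equiv.Perm.sign σ : ℤ) : ℝ) * ∏ i, iteratedDeriv ((σ i : Fin n) : ℕ) (f i) x := by
    funext x
    rw [wronskian, Matrix.det_apply]
    refine Finset.sum_congr rfl fun σ _ => ?_
    simp [Units.smul_def, zsmul_eq_mul]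
  rw [hrw]
  exact ContDiffOn.sum fun σ _ => contDiffOn_const.mul
    (prodOn Finset.univ _ fun i _ => iterOn hs (hf i) _)

lemma leibniz (hs : IsOpen s) {r h : ℝ → ℝ} (hr : ContDiffOn ℝ (⊤ : ℕ∞) r s)
    (hh : ContDiffOn ℝ (⊤ : ℕ∞) h s) (n : ℕ) :
    ∀ x ∈ s, iteratedDeriv n (fun y => h y * r y) x
      = ∑ i ∈ Finset.range (n + 1),
          (n.choose i : ℝ) * (iteratedDeriv i h x * iteratedDeriv (n - i) r x) := by
  induction n with
  | zero => intro x hx; simp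
  | succ n ih =>
    intro x hx
    rw [iteratedDeriv_succ, (evOn hs hx ih).deriv_eq]
    have hterm : ∀ i ∈ Finset.range (n + 1),
        HasDerivAt (fun y => (n.choose i : ℝ) * (iteratedDeriv i h y * iteratedDeriv (n - i) r y))
          ((n.choose i : ℝ) * (iteratedDeriv (i + 1) h x * iteratedDeriv (n - i) r x
            + iteratedDeriv i h x * iteratedDeriv (n - i + 1) r x)) x := by
      intro i _
      have h1 : HasDerivAt (iteratedDeriv i h) (iteratedDeriv (i + 1) h x) x := by
        rw [iteratedDeriv_succ]; exact hdAt hs (iterOn hs hh i) hx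
      have h2 : HasDerivAt (iteratedDeriv (n - i) r) (iteratedDeriv (n - i + 1) r x) x := by
        rw [iteratedDeriv_succ]; exact hdAt hs (iterOn hs hr (n - i)) hx
      exact (h1.mul h2).const_mul _
    rw [(HasDerivAt.fun_sum hterm).deriv]
    rw [Finset.sum_choose_succ_mul (fun i j => iteratedDeriv i h x * iteratedDeriv j r x) n,
      ← Finset.sum_add_distrib]
    refine Finset.sum_congr rfl fun i hi => ?_
    have hin : i ≤ n := Nat.lt_succ_iff.1 (Finset.mem_range.1 hi)
    rw [show n - i + 1 = n + 1 - i by omega]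
    ring
lemma wronskian_mul (hs : IsOpen s) {n : ℕ} {r : ℝ → ℝ} {g : Fin n → ℝ → ℝ}
    (hr : ContDiffOn ℝ (⊤ : ℕ∞) r s) (hg : ∀ k, ContDiffOn ℝ (⊤ : ℕ∞) (g k) s) {x : ℝ} (hx : x ∈ s) :
    wronskian n (fun k => fun y => r y * g k y) x = r x ^ n * wronskian n g x := by
  classical
  set L : Matrix (Fin n) (Fin n) ℝ := Matrix.of fun j i =>
    if (i : ℕ) ≤ (j : ℕ) then (((j : ℕ).choose i : ℕ) : ℝ) * iteratedDeriv ((j : ℕ) - i) r x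
    else 0 with hLdef
  have hfac : (Matrix.of fun j k : Fin n => iteratedDeriv (j : ℕ) ((fun k => fun y => r y * g k y) k) x)
      = L * (Matrix.of fun i k : Fin n => iteratedDeriv (i : ℕ) (g k) x) := by
    ext j k
    rw [Matrix.mul_apply, Matrix.of_apply]
    show iteratedDeriv (j : ℕ) (fun y => r y * g k y) x = _
    have hc : (fun y => r y * g k y) = fun y => g k y * r y := by funext y; ring
    rw [hc, leibniz hs hr (hg k) (j : ℕ) x hx]
    set F : ℕ → ℝ := fun m => if m ≤ (j : ℕ) then
        (((j : ℕ).choose m : ℕ) : ℝ) * (iteratedDeriv m (g k) x * iteratedDeriv ((j : ℕ) - m) r x)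
      else 0 with hF
    have hstep : ∀ i : Fin n, L j i * (Matrix.of fun i k : Fin n => iteratedDeriv (i : ℕ) (g k) x) i k
        = F (i : ℕ) := by
      intro i
      simp only [hLdef, hF, Matrix.of_apply]
      by_cases hij : (i : ℕ) ≤ (j : ℕ)
      · rw [if_pos hij, if_pos hij]; ring
      · rw [if_neg hij, if_neg hij, zero_mul]
    calc ∑ i ∈ Finset.range ((j : ℕ) + 1),
          (((j : ℕ).choose i : ℕ) : ℝ) * (iteratedDeriv i (g k) x * iteratedDeriv ((j : ℕ) - i) r x)
        = ∑ i ∈ Finset.range ((j : ℕ) + 1), F i := by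
          refine Finset.sum_congr rfl fun i hi => ?_
          simp only [hF]
          rw [if_pos (Nat.lt_succ_iff.1 (Finset.mem_range.1 hi))]
      _ = ∑ i ∈ Finset.range n, F i := by
          refine Finset.sum_subset (Finset.range_subset_range.2 (j.isLt : (j:ℕ) < n)) ?_
          intro i _ hi
          simp only [hF]
          exact if_neg (fun hle => hi (Finset.mem_range.2 (Nat.lt_succ_iff.2 hle)))
      _ = ∑ i : Fin n, F (i : ℕ) := (Fin.sum_univ_eq_sum_range F n).symm
      _ = ∑ i : Fin n, L j i * (Matrix.of fun i k : Fin n => iteratedDeriv (i : ℕ) (g k) x) i k :=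
          Finset.sum_congr rfl fun i _ => (hstep i).symm
  have hL : L.det = r x ^ n := by
    have htri : L.BlockTriangular OrderDual.toDual := by
      intro u v huv
      have : (u : ℕ) < (v : ℕ) := huv
      simp only [hLdef, Matrix.of_apply]
      rw [if_neg (by omega)]
    rw [Matrix.det_of_lowerTriangular L htri]
    have : ∀ j : Fin n, L j j = r x := by
      intro j
      simp only [hLdef, Matrix.of_apply]
      rw [if_pos le_rfl, Nat.choose_self, Nat.sub_self, iteratedDeriv_zero]
      simp
    rw [Finset.prod_congr rfl fun j _ => this j, Finset.prod_const, Finset.card_univ,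
      Fintype.card_fin]
  rw [wronskian, hfac, Matrix.det_mul, hL, wronskian]

lemma iter_const_zero (l : ℕ) :
    iteratedDeriv l (fun _ : ℝ => (0 : ℝ)) = fun _ => 0 := by
  induction l with
  | zero => simp [iteratedDeriv_zero]
  | succ l ih =>
    rw [iteratedDeriv_succ', show deriv (fun _ : ℝ => (0:ℝ)) = fun _ => (0:ℝ) from
      funext fun y => deriv_const y 0, ih]

lemma iter_const_one {m : ℕ} (hm : m ≠ 0) :
    iteratedDeriv m (fun _ : ℝ => (1 : ℝ)) = fun _ => 0 := by
  obtain ⟨l, rfl⟩ := Nat.exists_eq_succ_of_ne_zero hm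
  rw [iteratedDeriv_succ']
  have : deriv (fun _ : ℝ => (1 : ℝ)) = fun _ => (0 : ℝ) := by
    funext y; exact deriv_const y 1
  rw [this, iter_const_zero]

lemma wronskian_cons_one {n : ℕ} (g : Fin n → ℝ → ℝ) (x : ℝ) :
    wronskian (n + 1) ((Fin.cons (fun _ => (1 : ℝ)) g : Fin (n+1) → ℝ → ℝ)) x
      = wronskian n (fun k => deriv (g k)) x := by
  rw [wronskian, Matrix.det_succ_column_zero]
  rw [Finset.sum_eq_single (0 : Fin (n + 1))]
  · simp only [Matrix.of_apply, Fin.val_zero, pow_zero, one_mul, Fin.cons_zero,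
      iteratedDeriv_zero]
    rw [wronskian]
    have hsub : (Matrix.of fun j k : Fin (n+1) =>
        iteratedDeriv (j : ℕ) ((Fin.cons (fun _ => (1:ℝ)) g : Fin (n+1) → ℝ → ℝ) k) x).submatrix
          (Fin.succAbove 0) Fin.succ
        = Matrix.of fun j k : Fin n => iteratedDeriv (j : ℕ) (deriv (g k)) x := by
      ext j k
      simp only [Matrix.submatrix_apply, Matrix.of_apply, Fin.succAbove_zero, Fin.cons_succ,
        Fin.val_succ]
      rw [← iteratedDeriv_succ']
    rw [hsub]
  · intro i _ hi
    have : iteratedDeriv (i : ℕ) ((Fin.cons (fun _ => (1:ℝ)) g : Fin (n+1) → ℝ → ℝ) 0) x = 0 := by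
      rw [Fin.cons_zero, iter_const_one (fun h0 => hi (Fin.ext (by simp [h0])))]
    simp only [Matrix.of_apply, this, mul_zero, zero_mul]
  · intro h; exact absurd (Finset.mem_univ _) h
lemma darboux_one (hs : IsOpen s) {U p h : ℝ → ℝ} {e c : ℝ}
    (hU : ContDiffOn ℝ (⊤ : ℕ∞) U s) (hp : ContDiffOn ℝ (⊤ : ℕ∞) p s) (hh : ContDiffOn ℝ (⊤ : ℕ∞) h s)
    (hpne : ∀ y ∈ s, p y ≠ 0)
    (heqp : ∀ y ∈ s, -(deriv (deriv p) y) + U y * p y = e * p y)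
    (heqh : ∀ y ∈ s, -(deriv (deriv h) y) + U y * h y = c * h y)
    {x : ℝ} (hx : x ∈ s) :
    -(deriv (deriv (fun y => (p y * deriv h y - deriv p y * h y) / p y)) x)
      + (U x - 2 * deriv (deriv (fun y => Real.log |p y|)) x)
        * ((p x * deriv h x - deriv p x * h x) / p x)
    = c * ((p x * deriv h x - deriv p x * h x) / p x) := by
  have hp1 := derivOn hs hp
  have hp2 := derivOn hs hp1
  have hh1 := derivOn hs hh
  have hh2 := derivOn hs hh1
  have e1 : ∀ y ∈ s, deriv (deriv p) y = (U y - e) * p y := by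
    intro y hy
    have := heqp y hy
    have h2 : deriv (deriv p) y = U y * p y - e * p y := by linarith
    rw [h2]; ring
  have e2 : ∀ y ∈ s, deriv (deriv h) y = (U y - c) * h y := by
    intro y hy
    have := heqh y hy
    have h2 : deriv (deriv h) y = U y * h y - c * h y := by linarith
    rw [h2]; ring
  have e3 : deriv (deriv (deriv p)) x = deriv U x * p x + (U x - e) * deriv p x := by
    rw [(evOn hs hx e1).deriv_eq]
    exact (((hdAt hs hU hx).sub_const e).mul (hdAt hs hp hx)).deriv
  have e4 : deriv (deriv (deriv h)) x = deriv U x * h x + (U x - c) * deriv h x := by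
    rw [(evOn hs hx e2).deriv_eq]
    exact (((hdAt hs hU hx).sub_const c).mul (hdAt hs hh hx)).deriv
  have hThderiv : ∀ y ∈ s, deriv (fun y => (p y * deriv h y - deriv p y * h y) / p y) y =
      ((p y * deriv (deriv h) y - deriv (deriv p) y * h y) * p y
        - (p y * deriv h y - deriv p y * h y) * deriv p y) / (p y) ^ 2 := by
    intro y hy
    have hN : HasDerivAt (fun y => p y * deriv h y - deriv p y * h y)
        (p y * deriv (deriv h) y - deriv (deriv p) y * h y) y := by
      have := ((hdAt hs hp hy).fun_mul (hdAt hs hh1 hy)).fun_sub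
        ((hdAt hs hp1 hy).fun_mul (hdAt hs hh hy))
      exact this.congr_deriv (by ring)
    exact (hN.div (hdAt hs hp hy) (hpne y hy)).deriv
  have hPne : p x ≠ 0 := hpne x hx
  have hG : HasDerivAt (fun y =>
      ((p y * deriv (deriv h) y - deriv (deriv p) y * h y) * p y
        - (p y * deriv h y - deriv p y * h y) * deriv p y) / (p y) ^ 2)
      ((((deriv p x * deriv (deriv h) x + p x * deriv (deriv (deriv h)) x
            - deriv (deriv (deriv p)) x * h x - deriv (deriv p) x * deriv h x) * p x
          - (p x * deriv h x - deriv p x * h x) * deriv (deriv p) x) * p x ^ 2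
        - ((p x * deriv (deriv h) x - deriv (deriv p) x * h x) * p x
            - (p x * deriv h x - deriv p x * h x) * deriv p x) * (2 * p x * deriv p x))
        / p x ^ 4) x := by
    have hA : HasDerivAt (fun y =>
        (p y * deriv (deriv h) y - deriv (deriv p) y * h y) * p y
          - (p y * deriv h y - deriv p y * h y) * deriv p y)
        ((deriv p x * deriv (deriv h) x + p x * deriv (deriv (deriv h)) x
            - deriv (deriv (deriv p)) x * h x - deriv (deriv p) x * deriv h x) * p x
          + (p x * deriv (deriv h) x - deriv (deriv p) x * h x) * deriv p x
          - ((deriv p x * deriv h x + p x * deriv (deriv h) x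
              - deriv (deriv p) x * h x - deriv p x * deriv h x) * deriv p x
            + (p x * deriv h x - deriv p x * h x) * deriv (deriv p) x)) x := by
      have := ((((hdAt hs hp hx).fun_mul (hdAt hs hh2 hx)).fun_sub
          ((hdAt hs hp2 hx).fun_mul (hdAt hs hh hx))).fun_mul (hdAt hs hp hx)).fun_sub
        (((((hdAt hs hp hx).fun_mul (hdAt hs hh1 hx)).fun_sub
          ((hdAt hs hp1 hx).fun_mul (hdAt hs hh hx))).fun_mul (hdAt hs hp1 hx)))
      exact this.congr_deriv (by ring)
    have hden : HasDerivAt (fun y => (p y) ^ 2) (2 * p x * deriv p x) x := by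
      have := (hdAt hs hp hx).fun_pow 2
      exact this.congr_deriv (by ring)
    have := hA.fun_div hden (pow_ne_zero 2 hPne)
    exact this.congr_deriv (by ring)
  have hTh2 := ((evOn hs hx hThderiv).deriv_eq).trans hG.deriv
  have hV2 : deriv (deriv (fun y => Real.log |p y|)) x
      = (deriv (deriv p) x * p x - deriv p x * deriv p x) / (p x) ^ 2 := by
    have hlog : (fun y => Real.log |p y|) = fun y => Real.log (p y) :=
      funext fun y => Real.log_abs (p y)
    have hVd : ∀ y ∈ s, deriv (fun z => Real.log (p z)) y = deriv p y / p y :=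
      fun y hy => ((hdAt hs hp hy).log (hpne y hy)).deriv
    rw [hlog, (evOn hs hx hVd).deriv_eq]
    exact ((hdAt hs hp1 hx).div (hdAt hs hp hx) hPne).deriv
  rw [hTh2, hV2, e3, e4, e1 x hx, e2 x hx]
  field_simp
  ring

lemma reduction (hs : IsOpen s) {p : ℝ → ℝ} (hp : ContDiffOn ℝ (⊤ : ℕ∞) p s)
    (hpne : ∀ y ∈ s, p y ≠ 0) {n : ℕ} {g : Fin n → ℝ → ℝ}
    (hg : ∀ k, ContDiffOn ℝ (⊤ : ℕ∞) (g k) s) {x : ℝ} (hx : x ∈ s) :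
    wronskian (n + 1) (Fin.cons p g : Fin (n + 1) → ℝ → ℝ) x
      = p x * wronskian n (fun k => fun y =>
          (p y * deriv (g k) y - deriv p y * g k y) / p y) x := by
  set u : Fin n → ℝ → ℝ := fun k y => g k y / p y with hu
  have hus : ∀ k, ContDiffOn ℝ (⊤ : ℕ∞) (u k) s := fun k => (hg k).div hp hpne
  have hcons : ∀ k, ContDiffOn ℝ (⊤ : ℕ∞) ((Fin.cons (fun _ => (1:ℝ)) u : Fin (n+1) → ℝ → ℝ) k) s := by
    intro k
    refine Fin.cases ?_ (fun k => ?_) k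
    · rw [Fin.cons_zero]; exact contDiffOn_const
    · rw [Fin.cons_succ]; exact hus k
  have step1 : wronskian (n + 1) (Fin.cons p g : Fin (n + 1) → ℝ → ℝ) x
      = wronskian (n + 1) (fun k => fun y =>
          p y * (Fin.cons (fun _ => (1:ℝ)) u : Fin (n+1) → ℝ → ℝ) k y) x := by
    refine wronskian_congr fun k => evOn hs hx fun y hy => ?_
    refine Fin.cases ?_ (fun k => ?_) k
    · rw [Fin.cons_zero, Fin.cons_zero]; simp
    · rw [Fin.cons_succ, Fin.cons_succ, hu]
      rw [mul_div_cancel₀ _ (hpne y hy)]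
  have step2 := wronskian_mul hs hp hcons hx
  have step3 := wronskian_cons_one u x
  have step4 : wronskian n (fun k => fun y =>
        (p y * deriv (g k) y - deriv p y * g k y) / p y) x
      = wronskian n (fun k => fun y => p y * deriv (u k) y) x := by
    refine wronskian_congr fun k => evOn hs hx fun y hy => ?_
    have hd : deriv (u k) y = (deriv (g k) y * p y - g k y * deriv p y) / (p y) ^ 2 :=
      ((hdAt hs (hg k) hy).div (hdAt hs hp hy) (hpne y hy)).deriv
    rw [hd]
    field_simp [hpne y hy]
  have step5 := wronskian_mul hs hp (fun k => derivOn hs (hus k)) hx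
  rw [step1, step2, step3, step4, step5, pow_succ]
  ring
lemma logAbsOn (hs : IsOpen s) {f : ℝ → ℝ} (hf : ContDiffOn ℝ (⊤ : ℕ∞) f s)
    (hne : ∀ y ∈ s, f y ≠ 0) :
    ContDiffOn ℝ (⊤ : ℕ∞) (fun y => Real.log |f y|) s := by
  have h1 : (fun y => Real.log |f y|) = fun y => Real.log (f y) :=
    funext fun y => Real.log_abs (f y)
  rw [h1]
  exact Real.contDiffOn_log.comp hf fun y hy => by simpa using hne y hy

lemma snoc_eq_cons {α : Type*} {n : ℕ} (φ : Fin (n + 1) → α) (ψ : α) :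
    (Fin.snoc φ ψ : Fin (n + 2) → α)
      = Fin.cons (φ 0) (Fin.snoc (fun j : Fin n => φ j.succ) ψ : Fin (n + 1) → α) := by
  funext i
  refine Fin.cases ?_ (fun j => ?_) i
  · show (Fin.snoc φ ψ : Fin (n + 2) → α) (Fin.castSucc 0) = _
    rw [Fin.snoc_castSucc, Fin.cons_zero]
  · rw [Fin.cons_succ]
    refine Fin.lastCases ?_ (fun k => ?_) j
    · show (Fin.snoc φ ψ : Fin (n + 2) → α) (Fin.last (n + 1)) = _
      simp only [Fin.snoc_last]
    · rw [Fin.succ_castSucc, Fin.snoc_castSucc, Fin.snoc_castSucc]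

end DCaux

open DCaux in
theorem darboux_crum_aux (M : ℕ) :
    ∀ (a b : ℝ) (U ψ : ℝ → ℝ) (φ : Fin M → ℝ → ℝ) (E : ℝ) (Et : Fin M → ℝ),
    ContDiffOn ℝ (⊤ : ℕ∞) U (Set.Ioo a b) →
    ContDiffOn ℝ (⊤ : ℕ∞) ψ (Set.Ioo a b) →
    (∀ j, ContDiffOn ℝ (⊤ : ℕ∞) (φ j) (Set.Ioo a b)) →
    (∀ x ∈ Set.Ioo a b, -(deriv (deriv ψ) x) + U x * ψ x = E * ψ x) →
    (∀ j, ∀ x ∈ Set.Ioo a b,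
      -(deriv (deriv (φ j)) x) + U x * φ j x = Et j * φ j x) →
    (∀ s, 1 ≤ s → ∀ hs : s ≤ M, ∀ x ∈ Set.Ioo a b,
      wronskian s (fun i => φ (Fin.castLE hs i)) x ≠ 0) →
    ∀ x ∈ Set.Ioo a b,
      -(deriv (deriv (fun y =>
          wronskian (M + 1) (Fin.snoc φ ψ) y / wronskian M φ y)) x)
        + (U x - 2 * deriv (deriv (fun y => Real.log |wronskian M φ y|)) x)
          * (wronskian (M + 1) (Fin.snoc φ ψ) x / wronskian M φ x)
      = E * (wronskian (M + 1) (Fin.snoc φ ψ) x / wronskian M φ x) := by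
  induction M with
  | zero =>
    intro a b U ψ φ E Et hU hψ hφ heψ heφ hW x hx
    have hw0 : ∀ y : ℝ, wronskian 0 φ y = 1 := fun y => Matrix.det_isEmpty
    have hw1 : ∀ y : ℝ, wronskian 1 (Fin.snoc φ ψ) y = ψ y := by
      intro y
      rw [wronskian, Matrix.det_fin_one]
      show iteratedDeriv 0 ((Fin.snoc φ ψ : Fin 1 → ℝ → ℝ) 0) y = ψ y
      rw [iteratedDeriv_zero]
      show (Fin.snoc φ ψ : Fin 1 → ℝ → ℝ) (Fin.last 0) y = ψ y
      rw [Fin.snoc_last]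
    have h1 : (fun y => wronskian (0 + 1) (Fin.snoc φ ψ) y / wronskian 0 φ y) = ψ := by
      funext y; rw [hw0 y, hw1 y, div_one]
    have h2 : (fun y => Real.log |wronskian 0 φ y|) = fun _ => (0 : ℝ) := by
      funext y; rw [hw0 y]; simp
    rw [h1, h2, hw0 x, hw1 x, div_one]
    have h3 : deriv (deriv (fun _ : ℝ => (0 : ℝ))) x = 0 := by
      rw [show deriv (fun _ : ℝ => (0 : ℝ)) = fun _ => (0 : ℝ) from
        funext fun y => deriv_const y 0]
      exact deriv_const x 0
    rw [h3]
    have := heψ x hx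
    have h4 : U x - 2 * 0 = U x := by ring
    rw [h4]
    exact this
  | succ M ih =>
    intro a b U ψ φ E Et hU hψ hφ heψ heφ hW x hx
    have hIoo : IsOpen (Set.Ioo a b) := isOpen_Ioo
    have hp : ContDiffOn ℝ (⊤ : ℕ∞) (φ 0) (Set.Ioo a b) := hφ 0
    have hpne : ∀ y ∈ Set.Ioo a b, φ 0 y ≠ 0 := by
      intro y hy
      have h1 := hW 1 le_rfl (by omega) y hy
      have h2 : wronskian 1 (fun i => φ (Fin.castLE (by omega : 1 ≤ M + 1) i)) y
          = φ 0 y := by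
        rw [wronskian, Matrix.det_fin_one]
        show iteratedDeriv 0 (φ (Fin.castLE (by omega) 0)) y = φ 0 y
        rw [iteratedDeriv_zero]
        rfl
      rw [h2] at h1
      exact h1
    -- smoothness of the Darboux transform
    have hT : ∀ {f : ℝ → ℝ}, ContDiffOn ℝ (⊤ : ℕ∞) f (Set.Ioo a b) →
        ContDiffOn ℝ (⊤ : ℕ∞) (fun y => (φ 0 y * deriv f y - deriv (φ 0) y * f y) / φ 0 y)
          (Set.Ioo a b) := by
      intro f hf
      exact ((hp.mul (derivOn hIoo hf)).sub ((derivOn hIoo hp).mul hf)).div hp hpne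
    have hlogp : ContDiffOn ℝ (⊤ : ℕ∞) (fun y => Real.log |φ 0 y|) (Set.Ioo a b) :=
      logAbsOn hIoo hp hpne
    have hU' : ContDiffOn ℝ (⊤ : ℕ∞)
        (fun z => U z - 2 * deriv (deriv (fun y => Real.log |φ 0 y|)) z)
        (Set.Ioo a b) :=
      hU.sub (contDiffOn_const.mul (derivOn hIoo (derivOn hIoo hlogp)))
    -- the new seed family and transformed solution
    have hφ' : ∀ j : Fin M, ContDiffOn ℝ (⊤ : ℕ∞)
        (fun y => (φ 0 y * deriv (φ j.succ) y - deriv (φ 0) y * φ j.succ y) / φ 0 y)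
        (Set.Ioo a b) := fun j => hT (hφ j.succ)
    have hψ' : ContDiffOn ℝ (⊤ : ℕ∞)
        (fun y => (φ 0 y * deriv ψ y - deriv (φ 0) y * ψ y) / φ 0 y) (Set.Ioo a b) :=
      hT hψ
    -- snoc smoothness
    have hsnoc : ∀ k : Fin (M + 1), ContDiffOn ℝ (⊤ : ℕ∞)
        ((Fin.snoc (fun j : Fin M => φ j.succ) ψ : Fin (M + 1) → ℝ → ℝ) k)
        (Set.Ioo a b) := by
      intro k
      refine Fin.lastCases ?_ (fun j => ?_) k
      · rw [Fin.snoc_last]; exact hψ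
      · rw [Fin.snoc_castSucc]; exact hφ j.succ
    -- KEY1 : big wronskian factorization
    have KEY1 : ∀ y ∈ Set.Ioo a b,
        wronskian (M + 1 + 1) (Fin.snoc φ ψ) y
          = φ 0 y * wronskian (M + 1)
              (Fin.snoc (fun j : Fin M =>
                  fun z => (φ 0 z * deriv (φ j.succ) z - deriv (φ 0) z * φ j.succ z) / φ 0 z)
                (fun z => (φ 0 z * deriv ψ z - deriv (φ 0) z * ψ z) / φ 0 z)
                : Fin (M + 1) → ℝ → ℝ) y := by
      intro y hy
      have hrw : (Fin.snoc φ ψ : Fin (M + 2) → ℝ → ℝ)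
          = Fin.cons (φ 0) (Fin.snoc (fun j : Fin M => φ j.succ) ψ : Fin (M + 1) → ℝ → ℝ) :=
        snoc_eq_cons φ ψ
      have hred := reduction hIoo hp hpne hsnoc hy
      have hmatch : (fun k : Fin (M + 1) => fun z =>
            (φ 0 z * deriv ((Fin.snoc (fun j : Fin M => φ j.succ) ψ : Fin (M + 1) → ℝ → ℝ) k) z
              - deriv (φ 0) z * (Fin.snoc (fun j : Fin M => φ j.succ) ψ : Fin (M + 1) → ℝ → ℝ) k z) / φ 0 z)
          = (Fin.snoc (fun j : Fin M =>
              fun z => (φ 0 z * deriv (φ j.succ) z - deriv (φ 0) z * φ j.succ z) / φ 0 z)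
              (fun z => (φ 0 z * deriv ψ z - deriv (φ 0) z * ψ z) / φ 0 z)
              : Fin (M + 1) → ℝ → ℝ) := by
        funext k
        refine Fin.lastCases ?_ (fun j => ?_) k
        · simp only [Fin.snoc_last]
        · simp only [Fin.snoc_castSucc]
      rw [hrw, hred, hmatch]
    -- KEY2 : small wronskian factorization
    have KEY2 : ∀ y ∈ Set.Ioo a b,
        wronskian (M + 1) φ y
          = φ 0 y * wronskian M
              (fun j : Fin M =>
                fun z => (φ 0 z * deriv (φ j.succ) z - deriv (φ 0) z * φ j.succ z) / φ 0 z) y := by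
      intro y hy
      have hred := reduction hIoo hp hpne (fun j : Fin M => hφ j.succ) hy
      have hrw : (Fin.cons (φ 0) (fun j : Fin M => φ j.succ) : Fin (M + 1) → ℝ → ℝ) = φ :=
        Fin.cons_self_tail φ
      rw [← hrw]
      exact hred
    have hWne : ∀ y ∈ Set.Ioo a b, wronskian (M + 1) φ y ≠ 0 := by
      intro y hy
      have h1 := hW (M + 1) (by omega) le_rfl y hy
      have h2 : (fun i => φ (Fin.castLE (le_refl (M + 1)) i)) = φ := rfl
      rw [h2] at h1
      exact h1
    have hW'ne : ∀ y ∈ Set.Ioo a b,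
        wronskian M (fun j : Fin M =>
          fun z => (φ 0 z * deriv (φ j.succ) z - deriv (φ 0) z * φ j.succ z) / φ 0 z) y ≠ 0 := by
      intro y hy h0
      have := KEY2 y hy
      rw [h0, mul_zero] at this
      exact hWne y hy this
    -- nonvanishing hypothesis for the transformed family
    have hW' : ∀ t, 1 ≤ t → ∀ ht : t ≤ M, ∀ y ∈ Set.Ioo a b,
        wronskian t (fun i => (fun j : Fin M =>
          fun z => (φ 0 z * deriv (φ j.succ) z - deriv (φ 0) z * φ j.succ z) / φ 0 z)
          (Fin.castLE ht i)) y ≠ 0 := by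
      intro t ht1 ht y hy
      have h1 := hW (t + 1) (by omega) (by omega : t + 1 ≤ M + 1) y hy
      have hg : ∀ i : Fin t, ContDiffOn ℝ (⊤ : ℕ∞) (φ (Fin.castLE ht i).succ) (Set.Ioo a b) :=
        fun i => hφ _
      have hred := reduction hIoo hp hpne hg hy
      have hrw : (fun i : Fin (t + 1) => φ (Fin.castLE (by omega : t + 1 ≤ M + 1) i))
          = Fin.cons (φ 0) (fun i : Fin t => φ (Fin.castLE ht i).succ) := by
        funext i
        refine Fin.cases ?_ (fun i => ?_) i
        · rw [Fin.cons_zero]; rfl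
        · rw [Fin.cons_succ]; rfl
      rw [hrw, hred] at h1
      intro h0
      rw [h0, mul_zero] at h1
      exact h1 rfl
    -- transformed Schrödinger equations
    have heψ' : ∀ y ∈ Set.Ioo a b,
        -(deriv (deriv (fun z => (φ 0 z * deriv ψ z - deriv (φ 0) z * ψ z) / φ 0 z)) y)
          + (U y - 2 * deriv (deriv (fun z => Real.log |φ 0 z|)) y)
            * ((φ 0 y * deriv ψ y - deriv (φ 0) y * ψ y) / φ 0 y)
        = E * ((φ 0 y * deriv ψ y - deriv (φ 0) y * ψ y) / φ 0 y) :=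
      fun y hy => darboux_one hIoo hU hp hψ hpne (heφ 0) heψ hy
    have heφ' : ∀ j : Fin M, ∀ y ∈ Set.Ioo a b,
        -(deriv (deriv (fun z => (φ 0 z * deriv (φ j.succ) z - deriv (φ 0) z * φ j.succ z) / φ 0 z)) y)
          + (U y - 2 * deriv (deriv (fun z => Real.log |φ 0 z|)) y)
            * ((φ 0 y * deriv (φ j.succ) y - deriv (φ 0) y * φ j.succ y) / φ 0 y)
        = Et j.succ * ((φ 0 y * deriv (φ j.succ) y - deriv (φ 0) y * φ j.succ y) / φ 0 y) :=
      fun j y hy => darboux_one hIoo hU hp (hφ j.succ) hpne (heφ 0) (heφ j.succ) hy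
    -- apply the induction hypothesis
    have MAIN := ih a b
      (fun z => U z - 2 * deriv (deriv (fun y => Real.log |φ 0 y|)) z)
      (fun z => (φ 0 z * deriv ψ z - deriv (φ 0) z * ψ z) / φ 0 z)
      (fun j : Fin M =>
        fun z => (φ 0 z * deriv (φ j.succ) z - deriv (φ 0) z * φ j.succ z) / φ 0 z)
      E (fun j => Et j.succ)
      hU' hψ' hφ' heψ' heφ' hW' x hx
    -- conversion of quotients
    have hquot : ∀ y ∈ Set.Ioo a b,
        wronskian (M + 1)
            (Fin.snoc (fun j : Fin M =>
                fun z => (φ 0 z * deriv (φ j.succ) z - deriv (φ 0) z * φ j.succ z) / φ 0 z)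
              (fun z => (φ 0 z * deriv ψ z - deriv (φ 0) z * ψ z) / φ 0 z)
              : Fin (M + 1) → ℝ → ℝ) y
          / wronskian M (fun j : Fin M =>
              fun z => (φ 0 z * deriv (φ j.succ) z - deriv (φ 0) z * φ j.succ z) / φ 0 z) y
        = wronskian (M + 1 + 1) (Fin.snoc φ ψ) y / wronskian (M + 1) φ y := by
      intro y hy
      rw [KEY1 y hy, KEY2 y hy, mul_div_mul_left _ _ (hpne y hy)]
    have hq2 := ((evOn hIoo hx hquot).deriv).deriv_eq
    have hqx := hquot x hx
    -- conversion of potentials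
    have hlogW' : ContDiffOn ℝ (⊤ : ℕ∞)
        (fun y => Real.log |wronskian M (fun j : Fin M =>
          fun z => (φ 0 z * deriv (φ j.succ) z - deriv (φ 0) z * φ j.succ z) / φ 0 z) y|)
        (Set.Ioo a b) :=
      logAbsOn hIoo (wronskianOn hIoo fun j => hφ' j) hW'ne
    have hsum : ∀ y ∈ Set.Ioo a b,
        Real.log |wronskian (M + 1) φ y|
          = Real.log |φ 0 y| + Real.log |wronskian M (fun j : Fin M =>
              fun z => (φ 0 z * deriv (φ j.succ) z - deriv (φ 0) z * φ j.succ z) / φ 0 z) y| := by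
      intro y hy
      rw [KEY2 y hy, abs_mul,
        Real.log_mul (abs_ne_zero.2 (hpne y hy)) (abs_ne_zero.2 (hW'ne y hy))]
    have hd1 : ∀ y ∈ Set.Ioo a b,
        deriv (fun z => Real.log |wronskian (M + 1) φ z|) y
          = deriv (fun z => Real.log |φ 0 z|) y
            + deriv (fun z => Real.log |wronskian M (fun j : Fin M =>
                fun w => (φ 0 w * deriv (φ j.succ) w - deriv (φ 0) w * φ j.succ w) / φ 0 w) z|) y := by
      intro y hy
      rw [(evOn hIoo hy hsum).deriv_eq]
      exact deriv_add (diffAt hIoo hlogp hy) (diffAt hIoo hlogW' hy)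
    have hpot : deriv (deriv (fun y => Real.log |wronskian (M + 1) φ y|)) x
        = deriv (deriv (fun y => Real.log |φ 0 y|)) x
          + deriv (deriv (fun y => Real.log |wronskian M (fun j : Fin M =>
              fun w => (φ 0 w * deriv (φ j.succ) w - deriv (φ 0) w * φ j.succ w) / φ 0 w) y|)) x := by
      rw [(evOn hIoo hx hd1).deriv_eq]
      exact deriv_add (diffAt hIoo (derivOn hIoo hlogp) hx)
        (diffAt hIoo (derivOn hIoo hlogW') hx)
    rw [hpot, ← hq2, ← hqx]
    linear_combination MAIN

/-- the M-step Darboux-Crum transformation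
`ψ^{[M]} = W[φ₁,…,φ_M,ψ]/W[φ₁,…,φ_M]` solves the deformed Schrödinger equation with
potential `U^{[M]} = U − 2 (log|W[φ₁,…,φ_M]|)''` and the same energy `E`. -/
theorem darboux_crum_transform_solution
    (a b : ℝ) (M : ℕ) (U ψ : ℝ → ℝ) (φ : Fin M → ℝ → ℝ) (E : ℝ) (Et : Fin M → ℝ)
    (hU : ContDiffOn ℝ (⊤ : ℕ∞) U (Set.Ioo a b))
    (hψ : ContDiffOn ℝ (⊤ : ℕ∞) ψ (Set.Ioo a b))
    (hφ : ∀ j, ContDiffOn ℝ (⊤ : ℕ∞) (φ j) (Set.Ioo a b))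
    (heψ : ∀ x ∈ Set.Ioo a b, -(deriv (deriv ψ) x) + U x * ψ x = E * ψ x)
    (heφ : ∀ j, ∀ x ∈ Set.Ioo a b,
      -(deriv (deriv (φ j)) x) + U x * φ j x = Et j * φ j x)
    (hW : ∀ s, 1 ≤ s → ∀ hs : s ≤ M, ∀ x ∈ Set.Ioo a b,
      wronskian s (fun i => φ (Fin.castLE hs i)) x ≠ 0) :
    ∀ x ∈ Set.Ioo a b,
      -(deriv (deriv (fun y =>
          wronskian (M + 1) (Fin.snoc φ ψ) y / wronskian M φ y)) x)
        + (U x - 2 * deriv (deriv (fun y => Real.log |wronskian M φ y|)) x)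
          * (wronskian (M + 1) (Fin.snoc φ ψ) x / wronskian M φ x)
      = E * (wronskian (M + 1) (Fin.snoc φ ψ) x / wronskian M φ x) :=
  darboux_crum_aux M a b U ψ φ E Et hU hψ hφ heψ heφ hW
end

section
/- Let d_1, …, d_M be distinct non-negative integers, let N be an integer with N ≥ max_j d_j, and let e_1 < e_2 < … < e_{N+1−M} be the elements of {0, 1, …, N} \ {N−d_1, …, N−d_M}. Then there exists a nonzero real constant c such that, as an identity of real polynomials, W[h̃_{d_1}, h̃_{d_2}, …, h̃_{d_M}](x) = c · W[H_{e_1}, H_{e_2}, …, H_{e_{N+1−M}}](x). -/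
open Polynomial Finset

/-- The Wronskian of `n` real polynomials: `W[p₁,…,pₙ] = det(p_k^{(j-1)})`. -/
noncomputable def polyWronskian (n : ℕ) (p : Fin n → Polynomial ℝ) : Polynomial ℝ :=
  Matrix.det (Matrix.of fun j k : Fin n =>
    (fun q : Polynomial ℝ => Polynomial.derivative q)^[(j : ℕ)] (p k))

/-- Physicists' Hermite polynomials: `H₀ = 1`, `H_{n+1} = 2x·Hₙ − Hₙ'`. -/
noncomputable def hermiteH : ℕ → Polynomial ℝ
  | 0 => 1
  | n + 1 => 2 * X * hermiteH n - Polynomial.derivative (hermiteH n)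

/-- Twisted Hermite polynomials `h̃_v(x) = i^{−v} H_v(ix)`:
`h̃₀ = 1`, `h̃_{v+1} = 2x·h̃_v + h̃_v'`. -/
noncomputable def hermiteTwist : ℕ → Polynomial ℝ
  | 0 => 1
  | v + 1 => 2 * X * hermiteTwist v + Polynomial.derivative (hermiteTwist v)

lemma hermiteH_succ (n : ℕ) :
    hermiteH (n+1) = 2 * X * hermiteH n - derivative (hermiteH n) := rfl

lemma hermiteTwist_succ (n : ℕ) :
    hermiteTwist (n+1) = 2 * X * hermiteTwist n + derivative (hermiteTwist n) := rfl

lemma derivH : ∀ n : ℕ, derivative (hermiteH n) = 2 * (n : Polynomial ℝ) * hermiteH (n-1) := by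
  intro n
  induction n using Nat.strong_induction_on with
  | _ n ih =>
    match n with
    | 0 => simp [hermiteH]
    | 1 =>
      rw [hermiteH_succ, show hermiteH 0 = 1 from rfl]
      simp
    | (k+2) =>
      have ih1 := ih (k+1) (by omega)
      simp only [Nat.add_sub_cancel] at ih1 ⊢
      rw [hermiteH_succ (k+1), derivative_sub, derivative_mul, derivative_mul, ih1]
      have hs := hermiteH_succ k
      push_cast
      simp only [derivative_X, derivative_ofNat, Polynomial.derivative_natCast, derivative_one, derivative_add,
        Polynomial.derivative_mul, Polynomial.derivative_natCast]
      linear_combination (-(2*(k:Polynomial ℝ)+2)) * hs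

lemma derivT : ∀ n : ℕ, derivative (hermiteTwist n) = 2 * (n : Polynomial ℝ) * hermiteTwist (n-1) := by
  intro n
  induction n using Nat.strong_induction_on with
  | _ n ih =>
    match n with
    | 0 => simp [hermiteTwist]
    | 1 =>
      rw [hermiteTwist_succ, show hermiteTwist 0 = 1 from rfl]
      simp
    | (k+2) =>
      have ih1 := ih (k+1) (by omega)
      simp only [Nat.add_sub_cancel] at ih1 ⊢
      rw [hermiteTwist_succ (k+1), derivative_add, derivative_mul, derivative_mul, ih1]
      have hs := hermiteTwist_succ k
      push_cast
      simp only [derivative_X, derivative_ofNat, Polynomial.derivative_natCast, derivative_one, derivative_add,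
        Polynomial.derivative_mul, Polynomial.derivative_natCast]
      linear_combination (-(2*(k:Polynomial ℝ)+2)) * hs

lemma choose_mul_sub (m k : ℕ) : (m - k) * m.choose k = m * (m-1).choose k := by
  rcases Nat.eq_zero_or_pos m with hm|hm
  · subst hm; rcases k with _|k <;> simp
  · have hm1 : m - 1 + 1 = m := by omega
    calc (m - k) * m.choose k = m.choose k * (m - k) := mul_comm _ _
      _ = m.choose (k+1) * (k+1) := (Nat.choose_succ_right_eq m k).symm
      _ = ((m-1)+1).choose (k+1) * (k+1) := by rw [hm1]
      _ = Nat.succ (m-1) * (m-1).choose k := (Nat.add_one_mul_choose_eq (m-1) k).symm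
      _ = m * (m-1).choose k := by rw [Nat.succ_eq_add_one, hm1]

lemma choose_mul_succ (m j : ℕ) (hm : 1 ≤ m) : (j + 1) * m.choose (j+1) = m * (m-1).choose j := by
  have hm1 : m - 1 + 1 = m := by omega
  calc (j+1) * m.choose (j+1) = m.choose (j+1) * (j+1) := mul_comm _ _
    _ = ((m-1)+1).choose (j+1) * (j+1) := by rw [hm1]
    _ = Nat.succ (m-1) * (m-1).choose j := (Nat.add_one_mul_choose_eq (m-1) j).symm
    _ = m * (m-1).choose j := by rw [Nat.succ_eq_add_one, hm1]

lemma convH (n : ℕ) :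
    ∑ k ∈ range (n+1), C ((-1:ℝ)^k * (n.choose k : ℝ)) * (hermiteH (n - k) * hermiteTwist k)
      = if n = 0 then 1 else 0 := by
  match n with
  | 0 =>
    simp [show hermiteH 0 = 1 from rfl, show hermiteTwist 0 = 1 from rfl]
  | (m+1) =>
    rw [if_neg (by omega : ¬ m + 1 = 0)]
    have hTw0 : hermiteTwist 0 = 1 := rfl
    rw [Finset.sum_range_succ']
    have hf0 : C ((-1:ℝ)^0 * (((m+1).choose 0 : ℕ) : ℝ)) * (hermiteH (m+1-0) * hermiteTwist 0)
        = hermiteH (m+1) := by simp [hTw0]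
    rw [hf0]
    have hB : ∀ j ∈ range (m+1),
        C ((-1:ℝ)^(j+1) * (((m+1).choose (j+1) : ℕ) : ℝ)) * (hermiteH (m+1-(j+1)) * hermiteTwist (j+1))
        = -(C ((-1:ℝ)^j * ((m.choose j : ℕ) : ℝ)) * (hermiteH (m-j) * hermiteTwist (j+1)))
          + -(C ((-1:ℝ)^j * ((m.choose (j+1) : ℕ) : ℝ)) * (hermiteH (m-j) * hermiteTwist (j+1))) := by
      intro j hj
      have h1 : m + 1 - (j+1) = m - j := by omega
      have h2 : (-1:ℝ)^(j+1) * (((m+1).choose (j+1) : ℕ) : ℝ)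
          = -((-1)^j * ((m.choose j : ℕ) : ℝ)) + -((-1)^j * ((m.choose (j+1) : ℕ) : ℝ)) := by
        rw [Nat.choose_succ_succ]
        push_cast
        ring
      rw [h1, h2, C_add, add_mul, map_neg, map_neg, neg_mul, neg_mul]
    rw [Finset.sum_congr rfl hB, Finset.sum_add_distrib, Finset.sum_neg_distrib,
      Finset.sum_neg_distrib]
    have hSc : ∑ k ∈ range (m+2), C ((-1:ℝ)^k * ((m.choose k : ℕ) : ℝ)) * (hermiteH (m+1-k) * hermiteTwist k)
        = -(∑ j ∈ range (m+1), C ((-1:ℝ)^j * ((m.choose (j+1) : ℕ) : ℝ)) * (hermiteH (m-j) * hermiteTwist (j+1)))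
          + hermiteH (m+1) := by
      rw [Finset.sum_range_succ']
      congr 1
      · rw [← Finset.sum_neg_distrib]
        refine Finset.sum_congr rfl fun j hj => ?_
        have h1 : m + 1 - (j+1) = m - j := by omega
        have h2 : (-1:ℝ)^(j+1) * ((m.choose (j+1) : ℕ):ℝ) = -((-1)^j * ((m.choose (j+1) : ℕ):ℝ)) := by ring
        rw [h1, h2, map_neg, neg_mul]
      · simp [hTw0]
    have hlast : C ((-1:ℝ)^(m+1) * ((m.choose (m+1) : ℕ) : ℝ)) * (hermiteH (m+1-(m+1)) * hermiteTwist (m+1)) = 0 := by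
      simp [Nat.choose_succ_self]
    rw [Finset.sum_range_succ, hlast, add_zero] at hSc
    rw [add_assoc, ← hSc, neg_add_eq_sub, sub_eq_zero, ← sub_eq_zero, ← Finset.sum_sub_distrib]
    -- per-term expansion
    have hE : ∀ k ∈ range (m+1),
        (C ((-1:ℝ)^k * ((m.choose k : ℕ) : ℝ)) * (hermiteH (m+1-k) * hermiteTwist k)
          - C ((-1:ℝ)^k * ((m.choose k : ℕ) : ℝ)) * (hermiteH (m-k) * hermiteTwist (k+1)))
        = -(C ((-1:ℝ)^k * (2*(m:ℝ)*(((m-1).choose k : ℕ) : ℝ))) * (hermiteH (m-1-k) * hermiteTwist k))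
          - C ((-1:ℝ)^k * ((m.choose k : ℕ) : ℝ)) * (2*((k:ℕ) : Polynomial ℝ) * (hermiteH (m-k) * hermiteTwist (k-1))) := by
      intro k hk
      have hk' : k ≤ m := by simpa using Nat.lt_succ_iff.mp (Finset.mem_range.mp hk)
      have hk1 : m + 1 - k = (m-k)+1 := by omega
      have hk2 : (m - k) - 1 = m - 1 - k := by omega
      rw [hk1, hermiteH_succ (m-k), hermiteTwist_succ k, derivH (m-k), derivT k, hk2]
      have hc : (-1:ℝ)^k * (2*(m:ℝ)*(((m-1).choose k : ℕ) : ℝ))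
          = ((-1)^k * ((m.choose k : ℕ) : ℝ)) * (2*(((m-k:ℕ) : ℕ):ℝ)) := by
        have h := choose_mul_sub m k
        have h2 : (((m-k:ℕ) : ℕ):ℝ) * ((m.choose k : ℕ) : ℝ) = (m:ℝ) * (((m-1).choose k : ℕ) : ℝ) := by
          exact_mod_cast congrArg (Nat.cast : ℕ → ℝ) h
        linear_combination (-2:ℝ) * (-1:ℝ)^k * h2
      have hc2 : (C ((-1:ℝ)^k * (2*(m:ℝ)*(((m-1).choose k : ℕ) : ℝ))) : Polynomial ℝ)
          = C ((-1:ℝ)^k * ((m.choose k : ℕ) : ℝ)) * (2 * (((m - k:ℕ) : ℕ) : Polynomial ℝ)) := by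
        rw [hc, C_mul]
        congr 1
        simp [C_mul, map_ofNat]
      rw [hc2]
      ring
    rw [Finset.sum_congr rfl hE, Finset.sum_sub_distrib, Finset.sum_neg_distrib]
    have hU : ∑ k ∈ range (m+1),
        C ((-1:ℝ)^k * (2*(m:ℝ)*(((m-1).choose k : ℕ) : ℝ))) * (hermiteH (m-1-k) * hermiteTwist k)
        = ∑ k ∈ range m,
        C ((-1:ℝ)^k * (2*(m:ℝ)*(((m-1).choose k : ℕ) : ℝ))) * (hermiteH (m-1-k) * hermiteTwist k) := by
      rw [Finset.sum_range_succ]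
      have hz : 2*(m:ℝ)*(((m-1).choose m : ℕ):ℝ) = 0 := by
        rcases Nat.eq_zero_or_pos m with hm|hm
        · subst hm; simp
        · rw [Nat.choose_eq_zero_of_lt (by omega)]; simp
      rw [hz]
      simp
    have hV : ∑ k ∈ range (m+1),
        C ((-1:ℝ)^k * ((m.choose k : ℕ) : ℝ)) * (2*((k:ℕ) : Polynomial ℝ) * (hermiteH (m-k) * hermiteTwist (k-1)))
        = - ∑ j ∈ range m,
        C ((-1:ℝ)^j * (2*(m:ℝ)*(((m-1).choose j : ℕ) : ℝ))) * (hermiteH (m-1-j) * hermiteTwist j) := by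
      rw [Finset.sum_range_succ']
      have h0 : C ((-1:ℝ)^0 * ((m.choose 0 : ℕ) : ℝ)) * (2*(((0:ℕ):ℕ) : Polynomial ℝ) * (hermiteH (m-0) * hermiteTwist (0-1))) = 0 := by
        simp
      rw [h0, add_zero, ← Finset.sum_neg_distrib]
      refine Finset.sum_congr rfl fun j hj => ?_
      have hj' : j < m := Finset.mem_range.mp hj
      have hidx : m - (j+1) = m - 1 - j := by omega
      have key : (C ((-1:ℝ)^(j+1) * ((m.choose (j+1) : ℕ):ℝ)) : Polynomial ℝ) * (2 * (((j+1:ℕ) : ℕ) : Polynomial ℝ))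
          = -(C ((-1:ℝ)^j * (2*(m:ℝ)*(((m-1).choose j : ℕ):ℝ)))) := by
        have h := choose_mul_succ m j (by omega)
        have h2 : (((j+1) : ℕ):ℝ) * ((m.choose (j+1) : ℕ):ℝ) = (m:ℝ) * (((m-1).choose j : ℕ):ℝ) := by
          exact_mod_cast congrArg (Nat.cast : ℕ → ℝ) h
        have hre : ((-1:ℝ)^(j+1) * ((m.choose (j+1) : ℕ):ℝ)) * (2*(((j+1):ℕ):ℝ))
            = -(((-1:ℝ)^j * (2*(m:ℝ)*(((m-1).choose j : ℕ):ℝ)))) := by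
          push_cast
          push_cast at h2
          linear_combination (-2:ℝ) * (-1:ℝ)^j * h2
        have hCc : (C ((2:ℝ)*(((j+1:ℕ):ℕ):ℝ)) : Polynomial ℝ) = 2 * (((j+1:ℕ):ℕ) : Polynomial ℝ) := by
          simp [C_mul, map_ofNat]
        rw [← hCc, ← C_mul, hre, map_neg]
      rw [hidx, Nat.add_sub_cancel]
      calc C ((-1:ℝ)^(j+1) * ((m.choose (j+1) : ℕ) : ℝ)) * (2*(((j+1:ℕ):ℕ) : Polynomial ℝ) * (hermiteH (m-1-j) * hermiteTwist j))
          = (C ((-1:ℝ)^(j+1) * ((m.choose (j+1) : ℕ):ℝ)) * (2 * (((j+1:ℕ) : ℕ) : Polynomial ℝ))) * (hermiteH (m-1-j) * hermiteTwist j) := by ring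
        _ = -(C ((-1:ℝ)^j * (2*(m:ℝ)*(((m-1).choose j : ℕ):ℝ))) * (hermiteH (m-1-j) * hermiteTwist j)) := by
            rw [key]; ring
    rw [hU, hV]
    ring

noncomputable def pH (n : ℕ) : Polynomial ℝ := C (((2^n * n.factorial : ℕ) : ℝ))⁻¹ * hermiteH n
noncomputable def qT (n : ℕ) : Polynomial ℝ := C (((2^n * n.factorial : ℕ) : ℝ))⁻¹ * hermiteTwist n

lemma cst_ne (n : ℕ) : ((2^n * n.factorial : ℕ) : ℝ) ≠ 0 :=
  Nat.cast_ne_zero.mpr (Nat.mul_ne_zero (pow_ne_zero _ two_ne_zero) n.factorial_ne_zero)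

lemma hermiteH_eq (n : ℕ) : hermiteH n = C ((2^n * n.factorial : ℕ) : ℝ) * pH n := by
  rw [pH, ← mul_assoc, ← C_mul, mul_inv_cancel₀ (cst_ne n), C_1, one_mul]

lemma hermiteTwist_eq (n : ℕ) : hermiteTwist n = C ((2^n * n.factorial : ℕ) : ℝ) * qT n := by
  rw [qT, ← mul_assoc, ← C_mul, mul_inv_cancel₀ (cst_ne n), C_1, one_mul]

lemma pH_zero : pH 0 = 1 := by
  rw [pH, show hermiteH 0 = 1 from rfl]; norm_num

lemma qT_zero : qT 0 = 1 := by
  rw [qT, show hermiteTwist 0 = 1 from rfl]; norm_num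

lemma deriv_pH (n : ℕ) : derivative (pH (n+1)) = pH n := by
  rw [pH, derivative_C_mul, derivH, Nat.add_sub_cancel, pH]
  have h2 : (2 * (((n+1):ℕ) : Polynomial ℝ)) = C (2*(((n+1):ℕ):ℝ)) := by
    simp [C_mul, map_ofNat]
  rw [h2, ← mul_assoc, ← C_mul]
  congr 2
  have h3 := cst_ne n
  have h4 := cst_ne (n+1)
  field_simp
  push_cast [Nat.factorial_succ]
  ring

lemma deriv_qT (n : ℕ) : derivative (qT (n+1)) = qT n := by
  rw [qT, derivative_C_mul, derivT, Nat.add_sub_cancel, qT]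
  have h2 : (2 * (((n+1):ℕ) : Polynomial ℝ)) = C (2*(((n+1):ℕ):ℝ)) := by
    simp [C_mul, map_ofNat]
  rw [h2, ← mul_assoc, ← C_mul]
  congr 2
  have h3 := cst_ne n
  have h4 := cst_ne (n+1)
  field_simp
  push_cast [Nat.factorial_succ]
  ring

noncomputable def pz (z : ℤ) : Polynomial ℝ := if 0 ≤ z then pH z.toNat else 0
noncomputable def qz (z : ℤ) : Polynomial ℝ := if 0 ≤ z then qT z.toNat else 0

lemma pz_natCast (n : ℕ) : pz n = pH n := by simp [pz]
lemma qz_natCast (n : ℕ) : qz n = qT n := by simp [qz]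
lemma pz_neg {z : ℤ} (h : z < 0) : pz z = 0 := if_neg (by omega)
lemma qz_neg {z : ℤ} (h : z < 0) : qz z = 0 := if_neg (by omega)

lemma deriv_pz (z : ℤ) : derivative (pz z) = pz (z-1) := by
  rcases lt_trichotomy z 0 with h|h|h
  · rw [pz_neg h, pz_neg (by omega)]; simp
  · subst h
    rw [show ((0:ℤ)) = ((0:ℕ):ℤ) from rfl, pz_natCast, pH_zero, pz_neg (by norm_num)]
    simp
  · obtain ⟨n, rfl⟩ : ∃ n : ℕ, z = ((n+1 : ℕ) : ℤ) := ⟨(z-1).toNat, by omega⟩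
    rw [pz_natCast, deriv_pH, show ((n+1:ℕ):ℤ) - 1 = ((n:ℕ):ℤ) by push_cast; ring, pz_natCast]

lemma deriv_qz (z : ℤ) : derivative (qz z) = qz (z-1) := by
  rcases lt_trichotomy z 0 with h|h|h
  · rw [qz_neg h, qz_neg (by omega)]; simp
  · subst h
    rw [show ((0:ℤ)) = ((0:ℕ):ℤ) from rfl, qz_natCast, qT_zero, qz_neg (by norm_num)]
    simp
  · obtain ⟨n, rfl⟩ : ∃ n : ℕ, z = ((n+1 : ℕ) : ℤ) := ⟨(z-1).toNat, by omega⟩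
    rw [qz_natCast, deriv_qT, show ((n+1:ℕ):ℤ) - 1 = ((n:ℕ):ℤ) by push_cast; ring, qz_natCast]

lemma iter_deriv_pz (j : ℕ) (z : ℤ) : derivative^[j] (pz z) = pz (z - j) := by
  induction j generalizing z with
  | zero => simp
  | succ i ih =>
    rw [Function.iterate_succ_apply, deriv_pz, ih]
    congr 1
    push_cast
    ring

lemma iter_deriv_qz (j : ℕ) (z : ℤ) : derivative^[j] (qz z) = qz (z - j) := by
  induction j generalizing z with
  | zero => simp
  | succ i ih =>
    rw [Function.iterate_succ_apply, deriv_qz, ih]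
    congr 1
    push_cast
    ring

lemma iter_C_mul (c : ℝ) (j : ℕ) (f : Polynomial ℝ) :
    derivative^[j] (C c * f) = C c * derivative^[j] f := by
  induction j generalizing f with
  | zero => simp
  | succ i ih =>
    rw [Function.iterate_succ_apply, derivative_C_mul, ih, Function.iterate_succ_apply]

lemma iter_deriv_H (j n : ℕ) :
    derivative^[j] (hermiteH n) = C ((2^n * n.factorial : ℕ) : ℝ) * pz ((n:ℤ) - j) := by
  rw [hermiteH_eq n, ← pz_natCast, iter_C_mul, iter_deriv_pz]

lemma iter_deriv_T (j n : ℕ) :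
    derivative^[j] (hermiteTwist n) = C ((2^n * n.factorial : ℕ) : ℝ) * qz ((n:ℤ) - j) := by
  rw [hermiteTwist_eq n, ← qz_natCast, iter_C_mul, iter_deriv_qz]

lemma choose_cst (n k : ℕ) (hk : k ≤ n) :
    n.choose k * ((2^(n-k) * (n-k).factorial) * (2^k * k.factorial)) = 2^n * n.factorial := by
  have h1 := Nat.choose_mul_factorial_mul_factorial hk
  have h2 : (2:ℕ)^(n-k) * 2^k = 2^n := by
    rw [← pow_add]; congr 1; omega
  calc n.choose k * ((2^(n-k) * (n-k).factorial) * (2^k * k.factorial))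
      = (2^(n-k) * 2^k) * (n.choose k * k.factorial * (n-k).factorial) := by ring
    _ = 2^n * n.factorial := by rw [h1, h2]

lemma convPQ (n : ℕ) :
    ∑ k ∈ range (n+1), C ((-1:ℝ)^k) * (pH (n-k) * qT k) = if n = 0 then 1 else 0 := by
  have h := convH n
  have hrw : ∑ k ∈ range (n+1), C ((-1:ℝ)^k * ((n.choose k : ℕ) : ℝ)) * (hermiteH (n - k) * hermiteTwist k)
      = C (((2^n * n.factorial : ℕ) : ℝ)) * ∑ k ∈ range (n+1), C ((-1:ℝ)^k) * (pH (n-k) * qT k) := by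
    rw [Finset.mul_sum]
    refine Finset.sum_congr rfl fun k hk => ?_
    have hk' : k ≤ n := Nat.lt_succ_iff.mp (Finset.mem_range.mp hk)
    rw [hermiteH_eq (n-k), hermiteTwist_eq k]
    have hC : (C ((-1:ℝ)^k * ((n.choose k : ℕ) : ℝ) * (((2^(n-k) * (n-k).factorial : ℕ):ℝ) * ((2^k * k.factorial : ℕ):ℝ))) : Polynomial ℝ)
        = C ((((2^n * n.factorial : ℕ):ℝ)) * ((-1:ℝ)^k)) := by
      apply congrArg C
      have := choose_cst n k hk'
      have hcast : ((n.choose k : ℕ) : ℝ) * (((2^(n-k) * (n-k).factorial : ℕ):ℝ) * ((2^k * k.factorial : ℕ):ℝ)) = ((2^n * n.factorial : ℕ):ℝ) := by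
        exact_mod_cast congrArg (Nat.cast : ℕ → ℝ) this
      linear_combination ((-1:ℝ)^k) * hcast
    calc C ((-1:ℝ)^k * ((n.choose k : ℕ) : ℝ)) * ((C (((2^(n-k) * (n-k).factorial : ℕ):ℝ)) * pH (n-k)) * (C (((2^k * k.factorial : ℕ):ℝ)) * qT k))
        = C ((-1:ℝ)^k * ((n.choose k : ℕ) : ℝ) * (((2^(n-k) * (n-k).factorial : ℕ):ℝ) * ((2^k * k.factorial : ℕ):ℝ))) * (pH (n-k) * qT k) := by
          simp only [C_mul]
          ring
      _ = C ((((2^n * n.factorial : ℕ):ℝ)) * ((-1:ℝ)^k)) * (pH (n-k) * qT k) := by rw [hC]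
      _ = C (((2^n * n.factorial : ℕ):ℝ)) * (C ((-1:ℝ)^k) * (pH (n-k) * qT k)) := by
          rw [C_mul]; ring
  rw [hrw] at h
  rcases Nat.eq_zero_or_pos n with hn|hn
  · subst hn
    simp only [if_pos rfl] at h ⊢
    simp only [zero_add, Finset.sum_range_one] at h ⊢
    have := cst_ne 0
    field_simp at h
    simpa using h
  · rw [if_neg (by omega)] at h ⊢
    rcases mul_eq_zero.mp h with h'|h'
    · exact absurd (by simpa using h') (cst_ne n)
    · exact h'

lemma convPQ' (n : ℕ) :
    ∑ k ∈ range (n+1), C ((-1:ℝ)^k) * (pH k * qT (n-k)) = if n = 0 then 1 else 0 := by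
  rw [← Finset.sum_range_reflect]
  simp only [Nat.add_sub_cancel]
  have hc : ∀ j ∈ range (n+1),
      C ((-1:ℝ)^(n-j)) * (pH (n-j) * qT (n-(n-j)))
      = C ((-1:ℝ)^n) * (C ((-1:ℝ)^j) * (pH (n-j) * qT j)) := by
    intro j hj
    have hj' : j ≤ n := Nat.lt_succ_iff.mp (Finset.mem_range.mp hj)
    have h1 : n - (n - j) = j := by omega
    have h2 : (-1:ℝ)^(n-j) = (-1)^n * (-1)^j := by
      have : n + j = (n - j) + 2*j := by omega
      rw [← pow_add, this, pow_add, pow_mul, neg_one_sq, one_pow, mul_one]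
    rw [h1, h2, C_mul, mul_assoc]
  rw [Finset.sum_congr rfl hc, ← Finset.mul_sum, convPQ n]
  rcases Nat.eq_zero_or_pos n with hn|hn
  · subst hn; simp
  · rw [if_neg (by omega : ¬ n = 0), mul_zero]

lemma jacobi_block {m k : ℕ} (A B : Matrix (Fin m ⊕ Fin k) (Fin m ⊕ Fin k) (Polynomial ℝ))
    (h : A * B = 1) :
    A.det * (B.toBlocks₂₂).det = (A.toBlocks₁₁).det := by
  rw [← Matrix.fromBlocks_toBlocks A, ← Matrix.fromBlocks_toBlocks B,
    Matrix.fromBlocks_multiply, ← Matrix.fromBlocks_one] at h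
  have h12 : A.toBlocks₁₁ * B.toBlocks₁₂ + A.toBlocks₁₂ * B.toBlocks₂₂ = 0 := by
    have h' := congrArg Matrix.toBlocks₁₂ h
    rw [Matrix.toBlocks_fromBlocks₁₂, Matrix.toBlocks_fromBlocks₁₂] at h'
    exact h'
  have h22 : A.toBlocks₂₁ * B.toBlocks₁₂ + A.toBlocks₂₂ * B.toBlocks₂₂ = 1 := by
    have h' := congrArg Matrix.toBlocks₂₂ h
    rw [Matrix.toBlocks_fromBlocks₂₂, Matrix.toBlocks_fromBlocks₂₂] at h'
    exact h'
  have key : A * Matrix.fromBlocks 1 (B.toBlocks₁₂) 0 (B.toBlocks₂₂) =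
      Matrix.fromBlocks (A.toBlocks₁₁) 0 (A.toBlocks₂₁) 1 := by
    conv_lhs => rw [← Matrix.fromBlocks_toBlocks A]
    rw [Matrix.fromBlocks_multiply]
    rw [Matrix.mul_one, Matrix.mul_one, Matrix.mul_zero, Matrix.mul_zero, add_zero, add_zero,
      h12, h22]
  have hdet := congrArg Matrix.det key
  rw [Matrix.det_mul, Matrix.det_fromBlocks_zero₂₁, Matrix.det_fromBlocks_zero₁₂] at hdet
  simpa using hdet

noncomputable def Fm (nn : ℕ) : Matrix (Fin nn) (Fin nn) (Polynomial ℝ) :=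
  Matrix.of fun i j => pz ((j:ℤ) - (i:ℤ))

noncomputable def Gm (nn : ℕ) : Matrix (Fin nn) (Fin nn) (Polynomial ℝ) :=
  Matrix.of fun i j => C ((-1:ℝ)^((i:ℕ)+(j:ℕ))) * qz ((j:ℤ) - (i:ℤ))

lemma FG (nn : ℕ) : Fm nn * Gm nn = 1 := by
  refine Matrix.ext fun i j => ?_
  rw [Matrix.mul_apply, Matrix.one_apply]
  have hsum : ∀ m : Fin nn, Fm nn i m * Gm nn m j
      = pz ((m:ℤ) - (i:ℤ)) * (C ((-1:ℝ)^((m:ℕ)+(j:ℕ))) * qz ((j:ℤ) - (m:ℤ))) := by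
    intro m; rfl
  simp only [hsum]
  rw [Fin.sum_univ_eq_sum_range
    (fun m => pz ((m:ℤ) - (i:ℤ)) * (C ((-1:ℝ)^((m:ℕ)+(j:ℕ))) * qz ((j:ℤ) - (m:ℤ)))) nn]
  rcases le_or_gt (i:ℕ) (j:ℕ) with hij|hij
  · set n := (j:ℕ) - (i:ℕ) with hn
    have hjn : (j:ℕ) = (i:ℕ) + n := by omega
    have hsub : Finset.Icc (i:ℕ) (j:ℕ) ⊆ Finset.range nn := by
      intro m hm
      simp only [Finset.mem_Icc] at hm
      exact Finset.mem_range.mpr (lt_of_le_of_lt hm.2 j.isLt)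
    rw [← Finset.sum_subset hsub (by
      intro m hm hm2
      simp only [Finset.mem_Icc, not_and_or, not_le] at hm2
      rcases hm2 with h'|h'
      · rw [pz_neg (by omega), zero_mul]
      · rw [qz_neg (by omega), mul_zero, mul_zero])]
    rw [← Finset.Ico_add_one_right_eq_Icc, Finset.sum_Ico_eq_sum_range]
    have hrange : (j:ℕ) + 1 - (i:ℕ) = n + 1 := by omega
    rw [hrange]
    have hterm : ∀ t ∈ range (n+1),
        pz ((((i:ℕ)+t : ℕ):ℤ) - (i:ℤ)) * (C ((-1:ℝ)^(((i:ℕ)+t)+(j:ℕ))) * qz ((j:ℤ) - (((i:ℕ)+t : ℕ):ℤ)))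
        = C ((-1:ℝ)^n) * (C ((-1:ℝ)^t) * (pH t * qT (n - t))) := by
      intro t ht
      have ht' : t ≤ n := Nat.lt_succ_iff.mp (Finset.mem_range.mp ht)
      have e1 : (((i:ℕ)+t : ℕ):ℤ) - (i:ℤ) = ((t:ℕ):ℤ) := by push_cast; ring
      have e2 : (j:ℤ) - (((i:ℕ)+t : ℕ):ℤ) = (((n-t:ℕ):ℕ):ℤ) := by
        have : (j:ℕ) = (i:ℕ) + n := hjn
        push_cast [Nat.cast_sub ht']
        omega
      have e3 : (-1:ℝ)^(((i:ℕ)+t)+(j:ℕ)) = (-1)^n * (-1)^t := by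
        have : ((i:ℕ)+t)+(j:ℕ) = 2*(i:ℕ) + (n + t) := by omega
        rw [this, pow_add, pow_mul, neg_one_sq, one_pow, one_mul, pow_add]
      rw [e1, e2, e3, pz_natCast, qz_natCast, C_mul]
      ring
    rw [Finset.sum_congr rfl hterm, ← Finset.mul_sum, convPQ' n]
    rcases eq_or_ne i j with hij'|hij'
    · have hn0 : n = 0 := by have := congrArg Fin.val hij'; omega
      rw [if_pos hij', if_pos hn0, hn0]
      norm_num
    · have : ¬ n = 0 := by
        intro h0
        exact hij' (Fin.ext (by omega))
      rw [if_neg hij', if_neg this, mul_zero]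
  · rw [if_neg (by intro h; subst h; omega)]
    apply Finset.sum_eq_zero
    intro m hm
    rcases le_or_gt (i:ℕ) m with h'|h'
    · rw [qz_neg (by omega), mul_zero, mul_zero]
    · rw [pz_neg (by omega), zero_mul]

lemma detF (nn : ℕ) : (Fm nn).det = 1 := by
  rw [Matrix.det_of_upperTriangular (by
    intro i j hij
    have : (j:ℤ) - (i:ℤ) < 0 := by
      have : (j:ℕ) < (i:ℕ) := hij
      omega
    exact pz_neg this)]
  have hdiag : ∀ i : Fin nn, Fm nn i i = 1 := by
    intro i
    show pz ((i:ℤ) - (i:ℤ)) = 1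
    rw [sub_self, show (0:ℤ) = ((0:ℕ):ℤ) from rfl, pz_natCast, pH_zero]
  simp [hdiag]

lemma polyW_eq (n : ℕ) (p : Fin n → Polynomial ℝ) :
    polyWronskian n p = Matrix.det (Matrix.of fun j k : Fin n => derivative^[(j : ℕ)] (p k)) :=
  rfl

/-- the polynomial Wronskian identity for the harmonic oscillator:
`W[h̃_{d₁},…,h̃_{d_M}] ∝ W[H_{e₁},…,H_{e_{N+1−M}}]` where `e₁ < … < e_{N+1−M}`
enumerate `{0,…,N} \ {N−d₁,…,N−d_M}`. -/
theorem hermite_wronskian_identity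
    (M N : ℕ) (d : Fin M → ℕ) (hd : Function.Injective d)
    (hdN : ∀ j, d j ≤ N)
    (e : Fin (N + 1 - M) → ℕ) (he : StrictMono e)
    (hrange : ∀ k : ℕ, (∃ i, e i = k) ↔ (k ≤ N ∧ ∀ j, k ≠ N - d j)) :
    ∃ c : ℝ, c ≠ 0 ∧
      polyWronskian M (fun j => hermiteTwist (d j))
        = Polynomial.C c * polyWronskian (N + 1 - M) (fun i => hermiteH (e i)) := by
  classical
  have hM : M ≤ N + 1 := by
    have hinj : Function.Injective (fun j : Fin M => (⟨d j, Nat.lt_succ_of_le (hdN j)⟩ : Fin (N+1))) := by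
      intro a b hab
      exact hd (congrArg Fin.val hab)
    simpa using Fintype.card_le_of_injective _ hinj
  have hKM : (N + 1 - M) + M = N + 1 := by omega
  have heN : ∀ i, e i ≤ N := fun i => ((hrange (e i)).1 ⟨i, rfl⟩).1
  have hene : ∀ i j, e i ≠ N - d j := fun i => ((hrange (e i)).1 ⟨i, rfl⟩).2
  -- column embeddings
  set dD : Fin M → Fin (N+1) := fun j => ⟨d j, Nat.lt_succ_of_le (hdN j)⟩ with hdD
  set fC : Fin (N + 1 - M) → Fin (N+1) := fun i => ⟨N - e i.rev, by omega⟩ with hfC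
  have hfCinj : Function.Injective fC := by
    intro a b hab
    have h1 := congrArg Fin.val hab
    simp only [hfC] at h1
    have h2 : e a.rev = e b.rev := by
      have ha := heN a.rev; have hb := heN b.rev; omega
    have h3 := he.injective h2
    have := congrArg Fin.rev h3
    simpa [Fin.rev_rev] using this
  have hdisj : ∀ (a : Fin (N + 1 - M)) (b : Fin M), fC a ≠ dD b := by
    intro a b hab
    have h1 := congrArg Fin.val hab
    simp only [hfC, hdD] at h1
    exact (hene a.rev b) (by have := heN a.rev; have := hdN b; omega)
  have hαinj : Function.Injective (Sum.elim fC dD) := by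
    intro a b hab
    match a, b with
    | .inl a, .inl b => exact congrArg _ (hfCinj hab)
    | .inr a, .inr b => exact congrArg _ (hd (congrArg Fin.val hab))
    | .inl a, .inr b => exact absurd hab (hdisj a b)
    | .inr a, .inl b => exact absurd hab.symm (hdisj b a)
  set α : (Fin (N + 1 - M) ⊕ Fin M) ≃ Fin (N+1) :=
    Equiv.ofBijective (Sum.elim fC dD)
      ((Fintype.bijective_iff_injective_and_card _).2 ⟨hαinj, by simp [hKM]⟩) with hα
  set gβ : Fin (N + 1 - M) ⊕ Fin M → Fin (N+1) :=
    Sum.elim (fun i => (⟨M + (i:ℕ), by omega⟩ : Fin (N+1))) (fun j => ⟨(j:ℕ), by omega⟩) with hgβ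
  have hβinj : Function.Injective gβ := by
    intro a b hab
    have h1 := congrArg Fin.val hab
    match a, b with
    | .inl a, .inl b =>
      simp only [hgβ, Sum.elim_inl] at h1
      exact congrArg _ (Fin.ext (by omega))
    | .inr a, .inr b =>
      simp only [hgβ, Sum.elim_inr] at h1
      exact congrArg _ (Fin.ext (by omega))
    | .inl a, .inr b =>
      simp only [hgβ, Sum.elim_inl, Sum.elim_inr] at h1
      exact absurd h1 (by have := b.isLt; omega)
    | .inr a, .inl b =>
      simp only [hgβ, Sum.elim_inl, Sum.elim_inr] at h1
      exact absurd h1 (by have := a.isLt; omega)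
  set β : (Fin (N + 1 - M) ⊕ Fin M) ≃ Fin (N+1) :=
    Equiv.ofBijective gβ
      ((Fintype.bijective_iff_injective_and_card _).2 ⟨hβinj, by simp [hKM]⟩) with hβ
  -- minors
  set QM : Matrix (Fin M) (Fin M) (Polynomial ℝ) :=
    Matrix.of (fun j k : Fin M => qz (((d k : ℕ) : ℤ) - ((j : ℕ) : ℤ))) with hQM
  set PM : Matrix (Fin (N + 1 - M)) (Fin (N + 1 - M)) (Polynomial ℝ) :=
    Matrix.of (fun j k : Fin (N + 1 - M) => pz (((e k : ℕ) : ℤ) - ((j : ℕ) : ℤ))) with hPM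
  set A := (Fm (N+1)).submatrix α β with hA
  set B := (Gm (N+1)).submatrix β α with hB
  have hAB : A * B = 1 := by
    rw [hA, hB, Matrix.submatrix_mul_equiv, FG, Matrix.submatrix_one_equiv]
  -- determinant of A is ±1
  have hAdet : ∃ ε : ℝ, (ε = 1 ∨ ε = -1) ∧ A.det = C ε := by
    set σ : Equiv.Perm (Fin (N + 1 - M) ⊕ Fin M) := β.trans α.symm with hσ
    have h1 : A = ((Fm (N+1)).submatrix α α).submatrix id σ := by
      refine Matrix.ext fun i j => ?_
      simp [hA, hσ, Matrix.submatrix_apply, Equiv.trans_apply, Equiv.apply_symm_apply]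
    rw [h1, Matrix.det_permute', Matrix.det_submatrix_equiv_self, detF, mul_one]
    rcases Int.units_eq_one_or σ.sign with h|h
    · exact ⟨1, Or.inl rfl, by rw [h]; simp⟩
    · exact ⟨-1, Or.inr rfl, by rw [h]; simp⟩
  obtain ⟨ε, hε1, hεdet⟩ := hAdet
  -- block B₂₂
  have hB22 : B.toBlocks₂₂ = Matrix.of (fun j k : Fin M => C ((-1:ℝ)^((j:ℕ))) *
      (Matrix.of (fun j' k' : Fin M => C ((-1:ℝ)^(d k')) * QM j' k') j k)) := by
    refine Matrix.ext fun j k => ?_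
    show Gm (N+1) (β (Sum.inr j)) (α (Sum.inr k)) = _
    have hb : (β (Sum.inr j) : ℕ) = (j : ℕ) := rfl
    have ha : (α (Sum.inr k) : ℕ) = d k := rfl
    show C ((-1:ℝ)^(((β (Sum.inr j)) : ℕ) + ((α (Sum.inr k)) : ℕ)))
        * qz (((α (Sum.inr k)) : ℤ) - ((β (Sum.inr j)) : ℤ)) = _
    rw [show ((α (Sum.inr k)) : ℤ) = ((d k : ℕ) : ℤ) by exact_mod_cast ha,
      show ((β (Sum.inr j)) : ℤ) = (((j:ℕ) : ℕ) : ℤ) by exact_mod_cast hb,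
      hb, ha, pow_add, C_mul]
    simp only [Matrix.of_apply, hQM]
    ring
  -- block A₁₁
  have hA11 : A.toBlocks₁₁
      = (PM.transpose).submatrix (Fin.revPerm : Equiv.Perm (Fin (N + 1 - M))) Fin.revPerm := by
    refine Matrix.ext fun i i' => ?_
    show Fm (N+1) (α (Sum.inl i)) (β (Sum.inl i')) = _
    have ha : (α (Sum.inl i) : ℕ) = N - e i.rev := rfl
    have hb : (β (Sum.inl i') : ℕ) = M + (i' : ℕ) := rfl
    show pz (((β (Sum.inl i')) : ℤ) - ((α (Sum.inl i)) : ℤ)) = _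
    have h2 : (PM.transpose).submatrix (Fin.revPerm : Equiv.Perm (Fin (N + 1 - M))) Fin.revPerm i i'
        = pz (((e i.rev : ℕ) : ℤ) - ((i'.rev : ℕ) : ℤ)) := rfl
    rw [h2]
    congr 1
    have h3 : ((β (Sum.inl i')) : ℤ) = ((M + (i':ℕ) : ℕ) : ℤ) := by exact_mod_cast hb
    have h4 : ((α (Sum.inl i)) : ℤ) = ((N - e i.rev : ℕ) : ℤ) := by exact_mod_cast ha
    have h5 : (i'.rev : ℕ) = (N + 1 - M) - ((i' : ℕ) + 1) := by rw [Fin.val_rev]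
    have h6 := heN i.rev
    have h7 : (i' : ℕ) < N + 1 - M := i'.isLt
    rw [h3, h4]
    omega
  -- Jacobi identity
  have hj := jacobi_block A B hAB
  rw [hεdet, hB22, hA11, Matrix.det_submatrix_equiv_self, Matrix.det_transpose,
    Matrix.det_mul_column, Matrix.det_mul_row] at hj
  rw [← map_prod, ← map_prod] at hj
  set sr : ℝ := ∏ j : Fin M, (-1:ℝ)^((j:ℕ)) with hsr
  set sc : ℝ := ∏ k : Fin M, (-1:ℝ)^(d k) with hsc
  -- Wronskians as constants times minors
  have hWT : polyWronskian M (fun j => hermiteTwist (d j))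
      = C (∏ k : Fin M, ((2^(d k) * (d k).factorial : ℕ) : ℝ)) * QM.det := by
    rw [polyW_eq]
    have hmat : (Matrix.of fun j k : Fin M => derivative^[(j : ℕ)] (hermiteTwist (d k)))
        = Matrix.of (fun j k : Fin M =>
            C (((2^(d k) * (d k).factorial : ℕ) : ℝ)) * QM j k) := by
      refine Matrix.ext fun j k => ?_
      show derivative^[(j:ℕ)] (hermiteTwist (d k)) = _
      rw [iter_deriv_T]
      rfl
    rw [hmat, Matrix.det_mul_row, ← map_prod]
  have hWH : polyWronskian (N + 1 - M) (fun i => hermiteH (e i))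
      = C (∏ i : Fin (N + 1 - M), ((2^(e i) * (e i).factorial : ℕ) : ℝ)) * PM.det := by
    rw [polyW_eq]
    have hmat : (Matrix.of fun j k : Fin (N + 1 - M) => derivative^[(j : ℕ)] (hermiteH (e k)))
        = Matrix.of (fun j k : Fin (N + 1 - M) =>
            C (((2^(e k) * (e k).factorial : ℕ) : ℝ)) * PM j k) := by
      refine Matrix.ext fun j k => ?_
      show derivative^[(j:ℕ)] (hermiteH (e k)) = _
      rw [iter_deriv_H]
      rfl
    rw [hmat, Matrix.det_mul_row, ← map_prod]
  set rL : ℝ := ∏ k : Fin M, ((2^(d k) * (d k).factorial : ℕ) : ℝ) with hrL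
  set rR : ℝ := ∏ i : Fin (N + 1 - M), ((2^(e i) * (e i).factorial : ℕ) : ℝ) with hrR
  have hrLne : rL ≠ 0 := Finset.prod_ne_zero_iff.mpr fun k _ => cst_ne (d k)
  have hrRne : rR ≠ 0 := Finset.prod_ne_zero_iff.mpr fun i _ => cst_ne (e i)
  have hsrne : sr ≠ 0 := Finset.prod_ne_zero_iff.mpr fun j _ => pow_ne_zero _ (by norm_num)
  have hscne : sc ≠ 0 := Finset.prod_ne_zero_iff.mpr fun k _ => pow_ne_zero _ (by norm_num)
  have hεne : ε ≠ 0 := by rcases hε1 with h|h <;> rw [h] <;> norm_num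
  refine ⟨rL / (rR * ε * (sr * sc)), ?_, ?_⟩
  · exact div_ne_zero hrLne
      (mul_ne_zero (mul_ne_zero hrRne hεne) (mul_ne_zero hsrne hscne))
  · rw [hWT, hWH, ← hj]
    have hrc : rL / (rR * ε * (sr * sc)) * (rR * (ε * (sr * sc))) = rL := by
      have hne : rR * ε * (sr * sc) ≠ 0 :=
        mul_ne_zero (mul_ne_zero hrRne hεne) (mul_ne_zero hsrne hscne)
      rw [show rR * (ε * (sr * sc)) = rR * ε * (sr * sc) from by ring, div_mul_cancel₀ _ hne]
    have hfin : (C (rL / (rR * ε * (sr * sc))) : Polynomial ℝ)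
        * (C rR * (C ε * (C sr * (C sc * QM.det))))
        = C rL * QM.det := by
      calc (C (rL / (rR * ε * (sr * sc))) : Polynomial ℝ)
            * (C rR * (C ε * (C sr * (C sc * QM.det))))
          = C (rL / (rR * ε * (sr * sc)) * (rR * (ε * (sr * sc)))) * QM.det := by
            simp only [C_mul]; ring
        _ = C rL * QM.det := by rw [hrc]
    rw [← hfin]
end

section
/- Let α be a real number with 2α not an integer. Let d_1, …, d_M be distinct non-negative integers, let N be an integer with N ≥ max_j d_j, and let e_1 < e_2 < … < e_{N+1−M} be the elements of {0, 1, …, N} \ {N−d_1, …, N−d_M}. Then there exists a nonzero real constant c such that, as an identity of real polynomials in η, W[ η ↦ L_{d_1}^{(−α)}(−η), …, η ↦ L_{d_M}^{(−α)}(−η) ](η) = c · W[ L_{e_1}^{(α−N−1)}, …, L_{e_{N+1−M}}^{(α−N−1)} ](η). -/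
open Polynomial

/-- The generalized Laguerre polynomial
`L_n^{(α)}(x) = Σ_{k=0}^n ((−1)^k/k!)·((α+k+1)⋯(α+n)/(n−k)!)·x^k`. -/
noncomputable def laguerreL (α : ℝ) (n : ℕ) : Polynomial ℝ :=
  ∑ k ∈ Finset.range (n + 1),
    Polynomial.C ((-1 : ℝ) ^ k / (Nat.factorial k)
      * (∏ i ∈ Finset.Ico (k + 1) (n + 1), (α + i)) / (Nat.factorial (n - k)))
      * X ^ k

/-!
Write `q_m(x) = L_m^{(-α)}(-x)`, `p_n = L_n^{(α-N-1)}` and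
`B(f, g) = Σ_{j ≤ N} (-1)^j f^{(j)} g^{(N-j)}`. On polynomials of degree at most `N` one has
`B(f', g) = -B(f, g')`, which makes `x D² + (1-α) D + x D` and `x D² + (α-N) D - x D` adjoint up
to a shift by `N`. As `q_m` and `p_n` are eigenfunctions of these operators with eigenvalues `m`
and `-n`, `B(q_m, p_n) = 0` unless `m + n = N`, and leading coefficients give
`B(q_m, p_{N-m}) = (-1)^N`. So the matrix `(q_m^{(j)})_{m, j ≤ N}` is invertible over `ℝ[x]`,
its inverse is built from the `p_n^{(N-j)}`, and its determinant is a nonzero constant. Jacobi's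
complementary minor theorem turns its minor `W[q_{d_1}, …, q_{d_M}]` into a constant times the
complementary minor of the inverse, which is `W[p_{e_1}, …, p_{e_{N+1-M}}]` up to row signs.
-/

open Finset

section Concomitant

variable {R : Type*} [CommRing R]

-- Lagrange's bilinear concomitant of `D^(N+1)`.
noncomputable def concomitant (N : ℕ) (f g : R[X]) : R[X] :=
  ∑ j ∈ range (N + 1), (-1) ^ j * derivative^[j] f * derivative^[N - j] g

variable {N : ℕ}

theorem concomitant_add_left (f₁ f₂ g : R[X]) :
    concomitant N (f₁ + f₂) g = concomitant N f₁ g + concomitant N f₂ g := by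
  simp only [concomitant, iterate_map_add, mul_add, add_mul, sum_add_distrib]

theorem concomitant_add_right (f g₁ g₂ : R[X]) :
    concomitant N f (g₁ + g₂) = concomitant N f g₁ + concomitant N f g₂ := by
  simp only [concomitant, iterate_map_add, mul_add, sum_add_distrib]

theorem concomitant_sub_right (f g₁ g₂ : R[X]) :
    concomitant N f (g₁ - g₂) = concomitant N f g₁ - concomitant N f g₂ := by
  simp only [concomitant, iterate_map_sub, mul_sub, sum_sub_distrib]

theorem concomitant_C_mul_left (a : R) (f g : R[X]) :
    concomitant N (C a * f) g = C a * concomitant N f g := by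
  simp only [concomitant, iterate_derivative_C_mul, mul_sum]
  exact sum_congr rfl fun _ _ => by ring

theorem concomitant_C_mul_right (a : R) (f g : R[X]) :
    concomitant N f (C a * g) = C a * concomitant N f g := by
  simp only [concomitant, iterate_derivative_C_mul, mul_sum]
  exact sum_congr rfl fun _ _ => by ring

theorem concomitant_derivative_add (f g : R[X]) :
    concomitant N (derivative f) g + concomitant N f (derivative g)
      = f * derivative^[N + 1] g + (-1) ^ N * derivative^[N + 1] f * g := by
  set u : ℕ → R[X] := fun j => (-1) ^ j * derivative^[j] f * derivative^[N + 1 - j] g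
  have hterm : ∀ j ∈ range (N + 1),
      (-1) ^ j * derivative^[j] (derivative f) * derivative^[N - j] g
        + (-1) ^ j * derivative^[j] f * derivative^[N - j] (derivative g) = u j - u (j + 1) := by
    intro j hj
    have hNj : N + 1 - j = N - j + 1 := by have := mem_range.1 hj; omega
    simp only [u, hNj, Nat.add_sub_add_right, ← Function.iterate_succ_apply, pow_succ]
    ring
  rw [concomitant, concomitant, ← sum_add_distrib, sum_congr rfl hterm, sum_range_sub']
  simp only [u, pow_zero, Function.iterate_zero_apply, Nat.sub_zero, Nat.sub_self, pow_succ]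
  ring

theorem concomitant_derivative_add_of_natDegree_le {f g : R[X]} (hf : f.natDegree ≤ N)
    (hg : g.natDegree ≤ N) :
    concomitant N (derivative f) g + concomitant N f (derivative g) = 0 := by
  rw [concomitant_derivative_add, iterate_derivative_eq_zero (Nat.lt_succ_of_le hf),
    iterate_derivative_eq_zero (Nat.lt_succ_of_le hg)]
  ring

theorem iterate_derivative_X_mul_derivative (p : R[X]) (j : ℕ) :
    derivative^[j] (X * derivative p)
      = X * derivative^[j + 1] p + (j : R[X]) * derivative^[j] p := by
  induction j with
  | zero => simp
  | succ j ih =>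
    rw [Function.iterate_succ_apply', ih]
    simp only [derivative_add, derivative_mul, derivative_X, derivative_natCast,
      ← Function.iterate_succ_apply' derivative]
    push_cast
    ring

theorem concomitant_X_mul_derivative_add (f g : R[X]) :
    concomitant N (X * derivative f) g + concomitant N f (X * derivative g)
      = X * (concomitant N (derivative f) g + concomitant N f (derivative g))
        + (N : R[X]) * concomitant N f g := by
  simp only [concomitant, ← sum_add_distrib, mul_sum]
  refine sum_congr rfl fun j hj => ?_
  have hNj : ((N - j : ℕ) : R[X]) = N - j := Nat.cast_sub (by have := mem_range.1 hj; omega)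
  rw [iterate_derivative_X_mul_derivative, iterate_derivative_X_mul_derivative, hNj,
    ← Function.iterate_succ_apply, ← Function.iterate_succ_apply]
  ring

theorem natDegree_X_mul_derivative_le (p : R[X]) :
    (X * derivative p).natDegree ≤ p.natDegree := by
  refine natDegree_le_iff_coeff_eq_zero.2 fun k hk => ?_
  cases k with
  | zero => simp
  | succ k => rw [coeff_X_mul, coeff_derivative, coeff_eq_zero_of_natDegree_lt hk, zero_mul]

theorem concomitant_adjoint {f g : R[X]} (hf : f.natDegree ≤ N) (hg : g.natDegree ≤ N) (a : R) :
    concomitant N (X * derivative (derivative f) + C a * derivative f + X * derivative f) g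
      = concomitant N f
          (X * derivative (derivative g) + C (1 - N - a) * derivative g - X * derivative g)
        + (N : R[X]) * concomitant N f g := by
  have hf' : (derivative f).natDegree ≤ N := (natDegree_derivative_le f).trans (by omega)
  have hXg : (X * derivative g).natDegree ≤ N := (natDegree_X_mul_derivative_le g).trans hg
  have h₁ := concomitant_X_mul_derivative_add (N := N) (derivative f) g
  have h₂ := concomitant_X_mul_derivative_add (N := N) f g
  have h₃ := concomitant_derivative_add_of_natDegree_le hf' hg
  have h₄ := concomitant_derivative_add_of_natDegree_le hf hg
  have h₅ := concomitant_derivative_add_of_natDegree_le hf hXg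
  rw [derivative_mul, derivative_X, one_mul, concomitant_add_right] at h₅
  rw [concomitant_add_left, concomitant_add_left, concomitant_C_mul_left, concomitant_sub_right,
    concomitant_add_right, concomitant_C_mul_right, map_sub, map_sub,
    map_one, map_natCast]
  linear_combination h₁ + h₂ + X * h₃ + (X + C a + (N : R[X])) * h₄ - h₅

theorem iterate_derivative_eq_C_of_natDegree_le {p : R[X]} {m : ℕ} (hp : p.natDegree ≤ m) :
    derivative^[m] p = C (m.factorial * p.coeff m) := by
  rw [eq_C_of_natDegree_le_zero ((natDegree_iterate_derivative p m).trans (by omega)),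
    coeff_iterate_derivative, zero_add, Nat.descFactorial_self, nsmul_eq_mul]

theorem concomitant_eq_C_of_natDegree_le {f g : R[X]} {m n : ℕ} (hf : f.natDegree ≤ m)
    (hg : g.natDegree ≤ n) (hmn : m + n = N) :
    concomitant N f g = C ((-1) ^ m * m.factorial * n.factorial * f.coeff m * g.coeff n) := by
  rw [concomitant, sum_eq_single m]
  · rw [show N - m = n by omega, iterate_derivative_eq_C_of_natDegree_le hf,
      iterate_derivative_eq_C_of_natDegree_le hg]
    simp only [map_mul, map_pow, map_neg, map_one, map_natCast]
    ring
  · intro j _ hjm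
    rcases lt_or_gt_of_ne hjm with h | h
    · rw [iterate_derivative_eq_zero (p := g) (by omega), mul_zero]
    · rw [iterate_derivative_eq_zero (p := f) (by omega), mul_zero, zero_mul]
  · exact fun h => absurd (mem_range.2 (by omega)) h

end Concomitant

section Laguerre

variable (γ : ℝ) (n : ℕ)

theorem coeff_laguerreL (k : ℕ) :
    (laguerreL γ n).coeff k = if k ≤ n then
      (-1) ^ k / k.factorial * (∏ i ∈ Ico (k + 1) (n + 1), (γ + i)) / (n - k).factorial
    else 0 := by
  simp only [laguerreL, finsetSum_coeff, coeff_C_mul, coeff_X_pow, mul_ite, mul_one, mul_zero,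
    sum_ite_eq, mem_range, Nat.lt_succ_iff]

theorem coeff_laguerreL_self : (laguerreL γ n).coeff n = (-1) ^ n / n.factorial := by
  simp [coeff_laguerreL]

theorem natDegree_laguerreL : (laguerreL γ n).natDegree = n := by
  refine natDegree_eq_of_le_of_coeff_ne_zero
    (natDegree_le_iff_coeff_eq_zero.2 fun k hk => ?_) ?_
  · rw [coeff_laguerreL, if_neg (by omega)]
  · rw [coeff_laguerreL_self]
    exact div_ne_zero (pow_ne_zero _ (by norm_num)) (by positivity)

theorem coeff_laguerreL_recurrence (k : ℕ) :
    (k + 1) * (γ + k + 1) * (laguerreL γ n).coeff (k + 1) + (n - k) * (laguerreL γ n).coeff k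
      = 0 := by
  rcases lt_trichotomy k n with hk | rfl | hk
  · obtain ⟨l, rfl⟩ := Nat.exists_eq_add_of_lt hk
    rw [coeff_laguerreL, coeff_laguerreL, if_pos (by omega), if_pos (by omega),
      prod_eq_prod_Ico_succ_bot (by omega : k + 1 < k + l + 1 + 1),
      show k + l + 1 - k = l + 1 by omega, show k + l + 1 - (k + 1) = l by omega,
      Nat.factorial_succ, Nat.factorial_succ]
    push_cast
    field_simp
    ring
  · rw [coeff_laguerreL, if_neg (by omega)]
    ring
  · rw [coeff_laguerreL, coeff_laguerreL, if_neg (by omega), if_neg (by omega)]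
    ring

theorem laguerreL_ode :
    X * derivative (derivative (laguerreL γ n)) + C (γ + 1) * derivative (laguerreL γ n)
      - X * derivative (laguerreL γ n) = -(C (n : ℝ) * laguerreL γ n) := by
  ext (_ | k)
  · simp only [coeff_add, coeff_sub, coeff_neg, mul_coeff_zero, coeff_X_zero,
      coeff_C_zero, zero_mul, coeff_derivative]
    linear_combination coeff_laguerreL_recurrence γ n 0
  · have h := coeff_laguerreL_recurrence γ n (k + 1)
    simp only [coeff_add, coeff_sub, coeff_neg, coeff_C_mul, coeff_X_mul, coeff_derivative]
    push_cast at h ⊢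
    linear_combination h

theorem natDegree_laguerreL_comp_neg_X : ((laguerreL γ n).comp (-X)).natDegree = n := by
  rw [natDegree_comp, natDegree_neg, natDegree_X, mul_one, natDegree_laguerreL]

theorem coeff_laguerreL_comp_neg_X_self :
    ((laguerreL γ n).comp (-X)).coeff n = 1 / n.factorial := by
  have h := comp_neg_X_leadingCoeff_eq (laguerreL γ n)
  rw [leadingCoeff, leadingCoeff, natDegree_laguerreL_comp_neg_X, natDegree_laguerreL,
    coeff_laguerreL_self] at h
  rw [h, ← mul_div_assoc, ← pow_add, ← two_mul, pow_mul, neg_one_sq, one_pow]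

theorem laguerreL_comp_neg_X_ode :
    X * derivative (derivative ((laguerreL γ n).comp (-X)))
        + C (γ + 1) * derivative ((laguerreL γ n).comp (-X))
        + X * derivative ((laguerreL γ n).comp (-X))
      = C (n : ℝ) * (laguerreL γ n).comp (-X) := by
  have h := congrArg (fun p => p.comp (-X)) (laguerreL_ode γ n)
  simp only [sub_comp, add_comp, mul_comp, neg_comp, X_comp, C_comp] at h
  simp only [derivative_comp, derivative_neg, derivative_X, neg_mul, one_mul, mul_neg, neg_neg]
  linear_combination -h

end Laguerre

theorem concomitant_laguerreL_comp_neg_X_laguerreL (α : ℝ) {N m n : ℕ} (hm : m ≤ N)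
    (hn : n ≤ N) :
    concomitant N ((laguerreL (-α) m).comp (-X)) (laguerreL (α - N - 1) n)
      = if m + n = N then C ((-1) ^ N) else 0 := by
  split_ifs with hmn
  · rw [concomitant_eq_C_of_natDegree_le (natDegree_laguerreL_comp_neg_X _ m).le
      (natDegree_laguerreL _ n).le hmn, coeff_laguerreL_comp_neg_X_self, coeff_laguerreL_self,
      ← hmn, pow_add]
    congr 1
    field_simp
  · have h := concomitant_adjoint (N := N) ((natDegree_laguerreL_comp_neg_X (-α) m).trans_le hm)
      ((natDegree_laguerreL (α - N - 1) n).trans_le hn) (-α + 1)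
    rw [laguerreL_comp_neg_X_ode, show 1 - N - (-α + 1) = α - N - 1 + 1 by ring, laguerreL_ode,
      concomitant_C_mul_left, ← neg_mul, ← C_neg, concomitant_C_mul_right] at h
    have hB : C ((m : ℝ) + n - N) * concomitant N ((laguerreL (-α) m).comp (-X))
        (laguerreL (α - N - 1) n) = 0 := by
      simp only [map_sub, map_add, map_natCast, map_neg] at h ⊢
      linear_combination h
    refine (mul_eq_zero.1 hB).resolve_left (C_ne_zero.2 fun h0 => hmn ?_)
    exact_mod_cast (sub_eq_zero.1 h0)

namespace Matrix

variable {R : Type*} [CommRing R]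

theorem det_toBlocks₁₁_eq_of_mul_eq_one {m n : Type*} [Fintype m] [Fintype n] [DecidableEq m]
    [DecidableEq n] {P Q : Matrix (m ⊕ n) (m ⊕ n) R} (h : P * Q = 1) :
    P.toBlocks₁₁.det = P.det * Q.toBlocks₂₂.det := by
  have hmul : P * fromBlocks 1 Q.toBlocks₁₂ 0 Q.toBlocks₂₂
      = fromBlocks P.toBlocks₁₁ 0 P.toBlocks₂₁ 1 := by
    ext i (j | j)
    · rcases i with i | i <;>
        simp [mul_apply, Fintype.sum_sum_type, one_apply, toBlocks₁₁, toBlocks₂₁]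
    · have := congrFun (congrFun h i) (Sum.inr j)
      rcases i with i | i <;>
        simpa [mul_apply, Fintype.sum_sum_type, one_apply, toBlocks₁₂, toBlocks₂₂] using this
  simpa [det_fromBlocks_zero₂₁, det_fromBlocks_zero₁₂] using (congrArg det hmul).symm

-- Jacobi's complementary minor theorem.
theorem det_submatrix_inl_eq_of_mul_eq_one {ι m n : Type*} [Fintype ι] [DecidableEq ι]
    [Fintype m] [Fintype n] [DecidableEq m] [DecidableEq n] {P Q : Matrix ι ι R} (h : P * Q = 1)
    (er ec : m ⊕ n ≃ ι) :
    (P.submatrix (er ∘ Sum.inl) (ec ∘ Sum.inl)).det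
      = Equiv.Perm.sign (ec.trans er.symm) * P.det
        * (Q.submatrix (ec ∘ Sum.inr) (er ∘ Sum.inr)).det := by
  have hPQ : P.submatrix er ec * Q.submatrix ec er = 1 := by
    rw [submatrix_mul_equiv, h, submatrix_one_equiv]
  have hP : P.submatrix er ec = (P.submatrix er er).submatrix id (ec.trans er.symm) := by
    ext i j; simp
  rw [← det_submatrix_equiv_self er P, ← det_permute', ← hP]
  exact det_toBlocks₁₁_eq_of_mul_eq_one hPQ

end Matrix

theorem Fin.exists_sumEquiv_of_injective {a b n : ℕ} (u : Fin a → ℕ) (v : Fin b → ℕ)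
    (hu : ∀ i, u i < n) (hv : ∀ i, v i < n) (h : Function.Injective (Sum.elim u v))
    (hn : a + b = n) :
    ∃ σ : Fin a ⊕ Fin b ≃ Fin n, ∀ x, (σ x : ℕ) = Sum.elim u v x := by
  let w : Fin a ⊕ Fin b → Fin n := fun x => ⟨Sum.elim u v x, by cases x <;> simp [hu, hv]⟩
  have hw : Function.Injective w := fun x y hxy => h (congrArg Fin.val hxy)
  exact ⟨Equiv.ofBijective w ((Fintype.bijective_iff_injective_and_card w).2 ⟨hw, by simp [hn]⟩),
    fun _ => rfl⟩

theorem iterate_derivative_matrix_mul_eq_one_of_concomitant {K : Type*} [Field K] {N : ℕ}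
    {f g : ℕ → K[X]} {c : K} (hc : c ≠ 0)
    (hfg : ∀ m n, m ≤ N → n ≤ N → concomitant N (f m) (g n) = if m + n = N then C c else 0) :
    Matrix.of (fun m j : Fin (N + 1) => derivative^[j] (f m))
      * Matrix.of (fun j n : Fin (N + 1) =>
          C (c⁻¹ * (-1) ^ (j : ℕ)) * derivative^[N - j] (g (N - n)))
      = 1 := by
  ext m n
  have hsum : ∑ j : Fin (N + 1), derivative^[j] (f m)
        * (C (c⁻¹ * (-1) ^ (j : ℕ)) * derivative^[N - j] (g (N - n)))
      = C c⁻¹ * concomitant N (f m) (g (N - n)) := by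
    rw [concomitant, mul_sum, ← Fin.sum_univ_eq_sum_range (fun j => C c⁻¹ *
      ((-1) ^ j * derivative^[j] (f m) * derivative^[N - j] (g (N - n))))]
    simp only [map_mul, map_pow, map_neg, map_one]
    exact sum_congr rfl fun _ _ => by ring
  rw [Matrix.mul_apply, Matrix.one_apply]
  simp only [Matrix.of_apply]
  rw [hsum, hfg _ _ (by omega) (by omega)]
  by_cases hmn : m = n
  · rw [if_pos (by omega), if_pos hmn, ← map_mul, inv_mul_cancel₀ hc, map_one]
  · rw [if_neg (by omega), if_neg hmn, mul_zero]

theorem polyWronskian_eq_C_mul_polyWronskian_of_concomitant {N M : ℕ} {f g : ℕ → ℝ[X]} {c : ℝ}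
    (hc : c ≠ 0)
    (hfg : ∀ m n, m ≤ N → n ≤ N → concomitant N (f m) (g n) = if m + n = N then C c else 0)
    (d : Fin M → ℕ) (hd : Function.Injective d) (hdN : ∀ j, d j ≤ N)
    (e : Fin (N + 1 - M) → ℕ) (he : Function.Injective e)
    (hrange : ∀ k : ℕ, (∃ i, e i = k) ↔ (k ≤ N ∧ ∀ j, k ≠ N - d j)) :
    ∃ c' : ℝ, c' ≠ 0 ∧
      polyWronskian M (fun j => f (d j)) = C c' * polyWronskian (N + 1 - M) (fun i => g (e i)) := by
  have heN : ∀ i, e i ≤ N := fun i => ((hrange _).1 ⟨i, rfl⟩).1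
  have hed : ∀ i j, e i ≠ N - d j := fun i => ((hrange _).1 ⟨i, rfl⟩).2
  have hM : M ≤ N + 1 := by
    simpa using Fintype.card_le_of_injective
      (fun j => (⟨d j, Nat.lt_succ_of_le (hdN j)⟩ : Fin (N + 1))) fun i j h => hd (by simpa using h)
  -- Rows of `A` are indexed by the functions, columns by the derivative orders: `er` lists the
  -- rows `d` of the minor and then the complementary rows `N - e`, `ec` the columns `0, …, M - 1`
  -- and then the complementary columns `N - s`.
  obtain ⟨er, her⟩ := Fin.exists_sumEquiv_of_injective (n := N + 1) d (fun t => N - e t)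
    (fun j => Nat.lt_succ_of_le (hdN j)) (fun t => by omega)
    (hd.sumElim (fun s t h => he (by have := heN s; have := heN t; omega))
      fun j t h => hed t j (by have := hdN j; have := heN t; omega)) (by omega)
  obtain ⟨ec, hec⟩ := Fin.exists_sumEquiv_of_injective (n := N + 1) (fun i : Fin M => (i : ℕ))
    (fun s : Fin (N + 1 - M) => N - (s : ℕ)) (fun i => by omega) (fun s => by omega)
    (Fin.val_injective.sumElim (fun s t h => Fin.ext (by omega)) fun i s h => by omega) (by omega)
  set A := Matrix.of fun (m j : Fin (N + 1)) => derivative^[j] (f m)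
  set Ainv := Matrix.of fun (j n : Fin (N + 1)) =>
    C (c⁻¹ * (-1) ^ (j : ℕ)) * derivative^[N - j] (g (N - n))
  have hA : A * Ainv = 1 := iterate_derivative_matrix_mul_eq_one_of_concomitant hc hfg
  have hA_minor : A.submatrix (er ∘ Sum.inl) (ec ∘ Sum.inl)
      = (Matrix.of fun j k : Fin M => derivative^[(j : ℕ)] (f (d k))).transpose := by
    ext j k
    simp [A, her, hec]
  have hAinv_minor : Ainv.submatrix (ec ∘ Sum.inr) (er ∘ Sum.inr)
      = Matrix.of fun s t : Fin (N + 1 - M) => C (c⁻¹ * (-1) ^ (N - (s : ℕ)))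
          * Matrix.of (fun j k : Fin (N + 1 - M) => derivative^[(j : ℕ)] (g (e k))) s t := by
    ext s t
    simp only [Ainv, Matrix.submatrix_apply, Function.comp_apply, Matrix.of_apply, her, hec,
      Sum.elim_inr]
    rw [show N - (N - (s : ℕ)) = s by omega, show N - (N - e t) = e t by have := heN t; omega]
  obtain ⟨u, hu, hA_det⟩ := Polynomial.isUnit_iff.1 (Matrix.isUnit_det_of_right_inverse hA)
  refine ⟨Equiv.Perm.sign (ec.trans er.symm) * u
      * ∏ s : Fin (N + 1 - M), c⁻¹ * (-1) ^ (N - (s : ℕ)),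
    mul_ne_zero (mul_ne_zero (by simp) hu.ne_zero) (prod_ne_zero_iff.2 fun _ _ =>
      mul_ne_zero (inv_ne_zero hc) (pow_ne_zero _ (by norm_num))), ?_⟩
  have hJacobi := Matrix.det_submatrix_inl_eq_of_mul_eq_one hA er ec
  rw [hA_minor, Matrix.det_transpose, hAinv_minor, Matrix.det_mul_column, ← hA_det,
    ← map_prod] at hJacobi
  rw [polyWronskian, polyWronskian, hJacobi, map_mul, map_mul, map_intCast]
  ring

theorem laguerre_wronskian_identity_general
    (α : ℝ)
    (M N : ℕ) (d : Fin M → ℕ) (hd : Function.Injective d)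
    (hdN : ∀ j, d j ≤ N)
    (e : Fin (N + 1 - M) → ℕ) (he : StrictMono e)
    (hrange : ∀ k : ℕ, (∃ i, e i = k) ↔ (k ≤ N ∧ ∀ j, k ≠ N - d j)) :
    ∃ c : ℝ, c ≠ 0 ∧
      polyWronskian M (fun j => (laguerreL (-α) (d j)).comp (-X))
        = Polynomial.C c
            * polyWronskian (N + 1 - M) (fun i => laguerreL (α - N - 1) (e i)) :=
  polyWronskian_eq_C_mul_polyWronskian_of_concomitant (pow_ne_zero N (neg_ne_zero.2 one_ne_zero))
    (fun _ _ => concomitant_laguerreL_comp_neg_X_laguerreL α) d hd hdN e he.injective hrange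

/-- the polynomial Wronskian identity for the radial oscillator:
`W[η ↦ L_{d₁}^{(−α)}(−η),…] ∝ W[L_{e₁}^{(α−N−1)},…]` where `e₁ < … < e_{N+1−M}`
enumerate `{0,…,N} \ {N−d₁,…,N−d_M}`. -/
theorem laguerre_wronskian_identity
    (α : ℝ) (hα : ∀ m : ℤ, 2 * α ≠ (m : ℝ))
    (M N : ℕ) (d : Fin M → ℕ) (hd : Function.Injective d)
    (hdN : ∀ j, d j ≤ N)
    (e : Fin (N + 1 - M) → ℕ) (he : StrictMono e)
    (hrange : ∀ k : ℕ, (∃ i, e i = k) ↔ (k ≤ N ∧ ∀ j, k ≠ N - d j)) :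
    ∃ c : ℝ, c ≠ 0 ∧
      polyWronskian M (fun j => (laguerreL (-α) (d j)).comp (-X))
        = Polynomial.C c
            * polyWronskian (N + 1 - M) (fun i => laguerreL (α - N - 1) (e i)) :=
  laguerre_wronskian_identity_general α M N d hd hdN e he hrange
end

section
/- Let d_1, …, d_M be distinct positive integers. Then, as an identity of real polynomials, W[H_{d_1}, H_{d_2}, …, H_{d_M}, 1](x) = (−1)^M · (∏_{j=1}^M 2 d_j) · W[H_{d_1−1}, H_{d_2−1}, …, H_{d_M−1}](x), where 1 denotes the constant polynomial one (the zeroth Hermite polynomial H_0). -/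
open Polynomial

lemma hermiteH_derivative (n : ℕ) :
    Polynomial.derivative (hermiteH (n + 1)) = Polynomial.C (2 * (n + 1) : ℝ) * hermiteH n := by
  induction n with
  | zero =>
    show Polynomial.derivative (2 * X * hermiteH 0 - Polynomial.derivative (hermiteH 0)) = _
    show Polynomial.derivative (2 * X * 1 - Polynomial.derivative 1) = _
    simp only [derivative_one, mul_one, sub_zero, derivative_mul, derivative_X,
      derivative_ofNat, hermiteH]
    rw [show ((2:ℝ[X])) = Polynomial.C 2 from (map_ofNat Polynomial.C 2).symm]
    norm_num
  | succ n ih =>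
    have h2 : hermiteH (n + 2) = 2 * X * hermiteH (n + 1)
        - Polynomial.derivative (hermiteH (n + 1)) := rfl
    have h1 : hermiteH (n + 1) = 2 * X * hermiteH n
        - Polynomial.derivative (hermiteH n) := rfl
    rw [h2]
    simp only [derivative_sub, derivative_mul, ih, derivative_C, derivative_X,
      derivative_ofNat]
    rw [h1]
    push_cast
    simp only [map_mul, map_add, map_one, map_ofNat]
    ring

lemma iterate_derivative_zero' (m : ℕ) :
    (fun q : Polynomial ℝ => Polynomial.derivative q)^[m] (0 : Polynomial ℝ) = 0 := by
  induction m with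
  | zero => rfl
  | succ m ihm =>
    rw [Function.iterate_succ_apply]
    show (fun q : Polynomial ℝ => Polynomial.derivative q)^[m] (Polynomial.derivative 0) = 0
    rw [Polynomial.derivative_zero]
    exact ihm

lemma iterate_derivative_C_mul' (m : ℕ) (c : ℝ) (p : Polynomial ℝ) :
    (fun q : Polynomial ℝ => Polynomial.derivative q)^[m] (Polynomial.C c * p)
      = Polynomial.C c * (fun q : Polynomial ℝ => Polynomial.derivative q)^[m] p := by
  induction m generalizing p with
  | zero => rfl
  | succ m ihm =>
    rw [Function.iterate_succ_apply, Function.iterate_succ_apply]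
    show (fun q : Polynomial ℝ => Polynomial.derivative q)^[m]
        (Polynomial.derivative (Polynomial.C c * p)) = _
    rw [Polynomial.derivative_C_mul, ihm]


/-- appending the constant polynomial `1 = H₀` lowers all labels:
`W[H_{d₁},…,H_{d_M},1] = (−1)^M · (∏ⱼ 2dⱼ) · W[H_{d₁−1},…,H_{d_M−1}]`. -/
theorem hermite_wronskian_snoc_one
    (M : ℕ) (d : Fin M → ℕ) (hd : Function.Injective d) (hpos : ∀ j, 0 < d j) :
    polyWronskian (M + 1) (Fin.snoc (fun j => hermiteH (d j)) 1)
      = Polynomial.C ((-1 : ℝ) ^ M * ∏ j, (2 * (d j : ℝ)))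
          * polyWronskian M (fun j => hermiteH (d j - 1)) := by
  unfold polyWronskian
  set A : Matrix (Fin (M+1)) (Fin (M+1)) (Polynomial ℝ) :=
    Matrix.of fun j k : Fin (M+1) =>
      (fun q : Polynomial ℝ => Polynomial.derivative q)^[(j : ℕ)]
        ((Fin.snoc (fun j => hermiteH (d j)) 1 : Fin (M+1) → Polynomial ℝ) k) with hA
  set B : Matrix (Fin M) (Fin M) (Polynomial ℝ) :=
    Matrix.of fun j k : Fin M =>
      (fun q : Polynomial ℝ => Polynomial.derivative q)^[(j : ℕ)] (hermiteH (d k - 1)) with hB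
  rw [Matrix.det_succ_column A (Fin.last M)]
  have hcol : ∀ i : Fin (M+1), A i (Fin.last M)
      = (fun q : Polynomial ℝ => Polynomial.derivative q)^[(i : ℕ)] 1 := by
    intro i
    have hl : (Fin.snoc (fun j => hermiteH (d j)) (1 : Polynomial ℝ) :
        Fin (M+1) → Polynomial ℝ) (Fin.last M) = 1 := by simp
    simp only [hA, Matrix.of_apply, hl]
  rw [Finset.sum_eq_single (0 : Fin (M+1))]
  · have hA0 : A 0 (Fin.last M) = 1 := by rw [hcol]; rfl
    rw [hA0]
    have hsub : (A.submatrix (Fin.succAbove 0) (Fin.succAbove (Fin.last M)))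
        = Matrix.of (fun j k : Fin M => Polynomial.C (2 * (d k : ℝ)) * B j k) := by
      refine Matrix.ext fun j k => ?_
      have h1 : (Fin.succAbove (0 : Fin (M+1))) j = j.succ := rfl
      have h2 : (Fin.succAbove (Fin.last M)) k = k.castSucc := Fin.succAbove_last_apply k
      simp only [Matrix.submatrix_apply, h1, h2, hA, hB, Matrix.of_apply, Fin.snoc_castSucc,
        Fin.val_succ]
      rw [Function.iterate_succ_apply]
      have hdk : d k = (d k - 1) + 1 := (Nat.succ_pred_eq_of_pos (hpos k)).symm
      have hc : ((d k - 1 : ℕ) : ℝ) + 1 = (d k : ℝ) := by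
        exact_mod_cast congrArg (Nat.cast : ℕ → ℝ) hdk.symm
      have hder : Polynomial.derivative (hermiteH (d k)) =
          Polynomial.C (2 * (d k : ℝ)) * hermiteH (d k - 1) := by
        conv_lhs => rw [hdk]
        rw [hermiteH_derivative, hc]
      show (fun q : Polynomial ℝ => Polynomial.derivative q)^[(j:ℕ)]
          (Polynomial.derivative (hermiteH (d k))) = _
      rw [hder, iterate_derivative_C_mul']
    rw [hsub, Matrix.det_mul_row (fun k : Fin M => Polynomial.C (2 * (d k : ℝ))) B]
    simp only [Fin.val_zero, Fin.val_last, pow_zero, zero_add, one_mul, map_mul, map_pow,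
      map_neg, map_one, map_prod]
    ring
  · intro i _ hi
    have hz : A i (Fin.last M) = 0 := by
      rw [hcol]
      obtain ⟨m, hm⟩ := Nat.exists_eq_succ_of_ne_zero (fun h => hi (Fin.ext h))
      rw [hm, Function.iterate_succ_apply]
      show (fun q : Polynomial ℝ => Polynomial.derivative q)^[m] (Polynomial.derivative 1) = 0
      rw [Polynomial.derivative_one]
      exact iterate_derivative_zero' m
    rw [hz]
    ring
  · intro h
    exact absurd (Finset.mem_univ _) h
end
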